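/- arXiv:1511.00314 — 5 statements merged into one kernel-verified Lean document; each statement's English description precedes it below -/
import Mathlib

section
/- For every integer n ≥ 2, the linear ordering polytope PLO_n has affine dimension n(n−1)/2. -/
open Finset

abbrev Vec (n : ℕ) := Fin n × Fin n → ℝ

def chi {n : ℕ} (R : Finset (Fin n × Fin n)) : Vec n := fun p => if p ∈ R then 1 else 0

def IsPartialOrderRel {n : ℕ} (R : Finset (Fin n × Fin n)) : Prop :=
  (∀ i j : Fin n, (i, j) ∈ R → (j, i) ∉ R) ∧
  (∀ i j k : Fin n, (i, j) ∈ R → (j, k) ∈ R → (i, k) ∈ R)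

def IsLinearOrderRel {n : ℕ} (R : Finset (Fin n × Fin n)) : Prop :=
  IsPartialOrderRel R ∧ ∀ i j : Fin n, i ≠ j → (i, j) ∈ R ∨ (j, i) ∈ R

def IsStrictWeakOrderRel {n : ℕ} (R : Finset (Fin n × Fin n)) : Prop :=
  IsPartialOrderRel R ∧ ∀ i j k : Fin n, (i, k) ∈ R → (i, j) ∈ R ∨ (j, k) ∈ R

def IsIntervalOrderRel {n : ℕ} (R : Finset (Fin n × Fin n)) : Prop :=
  ∃ f g : Fin n → ℝ, (∀ i, f i ≤ g i) ∧ ∀ i j : Fin n, ((i, j) ∈ R ↔ g i < f j)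

def IsSemiorderRel {n : ℕ} (R : Finset (Fin n × Fin n)) : Prop :=
  ∃ f : Fin n → ℝ, ∀ i j : Fin n, ((i, j) ∈ R ↔ f i + 1 < f j)

def PPO (n : ℕ) : Set (Vec n) := convexHull ℝ {x | ∃ R, IsPartialOrderRel R ∧ x = chi R}
def PIO (n : ℕ) : Set (Vec n) := convexHull ℝ {x | ∃ R, IsIntervalOrderRel R ∧ x = chi R}
def PSO (n : ℕ) : Set (Vec n) := convexHull ℝ {x | ∃ R, IsSemiorderRel R ∧ x = chi R}
def PSWO (n : ℕ) : Set (Vec n) := convexHull ℝ {x | ∃ R, IsStrictWeakOrderRel R ∧ x = chi R}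
def PLO (n : ℕ) : Set (Vec n) := convexHull ℝ {x | ∃ R, IsLinearOrderRel R ∧ x = chi R}

open Classical in
noncomputable def adim {n : ℕ} (s : Set (Vec n)) : ℤ :=
  if s = ∅ then -1 else (Module.finrank ℝ (affineSpan ℝ s).direction : ℤ)

def lhs {n : ℕ} (α : Fin n × Fin n → ℝ) (x : Vec n) : ℝ := ∑ p : Fin n × Fin n, α p * x p

def Valid {n : ℕ} (α : Fin n × Fin n → ℝ) (β : ℝ) (P : Set (Vec n)) : Prop :=
  ∀ x ∈ P, lhs α x ≤ β

def Face {n : ℕ} (α : Fin n × Fin n → ℝ) (β : ℝ) (P : Set (Vec n)) : Set (Vec n) :=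
  {x | x ∈ P ∧ lhs α x = β}

def IsFDI {n : ℕ} (α : Fin n × Fin n → ℝ) (β : ℝ) (P : Set (Vec n)) : Prop :=
  Valid α β P ∧ adim (Face α β P) = adim P - 1

def primCoeff {n : ℕ} (A B : Finset (Fin n × Fin n)) : Fin n × Fin n → ℝ :=
  fun p => (if p ∈ A then (1 : ℝ) else 0) - (if p ∈ B then (1 : ℝ) else 0)

def InArcs {n : ℕ} (A : Finset (Fin n × Fin n)) : Prop := ∀ p ∈ A, p.1 ≠ p.2

def C1 {n : ℕ} (A : Finset (Fin n × Fin n)) : Prop :=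
  ∀ i j k l : Fin n, (i, j) ∈ A → (k, l) ∈ A → (i, j) ≠ (k, l) → i ≠ k ∧ j ≠ l

def C2 {n : ℕ} (A B : Finset (Fin n × Fin n)) : Prop :=
  ∀ i j k l : Fin n, (i, j) ∈ A → (k, l) ∈ A →
    i ≠ j → i ≠ k → i ≠ l → j ≠ k → j ≠ l → k ≠ l → (i, l) ∈ B

def C3 {n : ℕ} (A B : Finset (Fin n × Fin n)) : Prop :=
  ∀ i j k : Fin n, (i, j) ∈ A → (j, k) ∈ A → i ≠ j → j ≠ k → i ≠ k → (i, k) ∈ B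

def C4 {n : ℕ} (A B : Finset (Fin n × Fin n)) : Prop :=
  ∀ i j k : Fin n, (i, j) ∈ A → (j, k) ∈ A → i ≠ j → j ≠ k → i ≠ k →
    ((i, k) ∈ B ∨ ∃ p : Fin n, p ≠ i ∧ p ≠ j ∧ p ≠ k ∧ (i, p) ∈ B ∧ (p, k) ∈ B)

def C5 {n : ℕ} (A B : Finset (Fin n × Fin n)) : Prop :=
  ∀ i j k l : Fin n, (i, j) ∈ A → (j, k) ∈ A → (k, l) ∈ A →
    i ≠ j → i ≠ k → i ≠ l → j ≠ k → j ≠ l → k ≠ l →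
    ((i, k) ∈ B ∨ (j, l) ∈ B ∨
     (∃ r : Fin n, r ≠ i ∧ r ≠ j ∧ r ≠ k ∧ r ≠ l ∧ (i, r) ∈ B ∧ (r, k) ∈ B) ∨
     (∃ s : Fin n, s ≠ i ∧ s ≠ j ∧ s ≠ k ∧ s ≠ l ∧ (j, s) ∈ B ∧ (s, l) ∈ B) ∨
     (∃ t : Fin n, t ≠ i ∧ t ≠ j ∧ t ≠ k ∧ t ≠ l ∧ (i, t) ∈ B ∧ (t, l) ∈ B) ∨
     (∃ u v : Fin n, u ≠ v ∧ u ≠ i ∧ u ≠ j ∧ u ≠ k ∧ u ≠ l ∧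
        v ≠ i ∧ v ≠ j ∧ v ≠ k ∧ v ≠ l ∧ (i, u) ∈ B ∧ (u, v) ∈ B ∧ (v, l) ∈ B))

namespace PLOaux

variable {n : ℕ}

def bvec (n : ℕ) (q : {q : Fin n × Fin n // q.1 < q.2}) : Vec n :=
  fun p => if p = q.1 then 1 else if p = q.1.swap then -1 else 0

lemma ne_swap_of_lt {a b : Fin n} (h : a < b) (q : {q : Fin n × Fin n // q.1 < q.2}) :
    (a, b) ≠ q.1.swap := by
  intro he
  have hq := q.2
  rw [Prod.ext_iff] at he
  simp only [Prod.fst_swap, Prod.snd_swap] at he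
  rw [he.1, he.2] at h
  exact absurd (hq.trans h) (lt_irrefl _)

lemma ne_fst_of_gt {a b : Fin n} (h : b < a) (q : {q : Fin n × Fin n // q.1 < q.2}) :
    (a, b) ≠ q.1 := by
  intro he
  have hq := q.2
  rw [← he] at hq
  exact absurd (hq.trans h) (lt_irrefl _)

lemma ne_fst_of_eq {a : Fin n} (q : {q : Fin n × Fin n // q.1 < q.2}) :
    (a, a) ≠ q.1 := by
  intro he
  have hq := q.2
  rw [← he] at hq
  exact absurd hq (lt_irrefl _)

lemma ne_swap_of_eq {a : Fin n} (q : {q : Fin n × Fin n // q.1 < q.2}) :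
    (a, a) ≠ q.1.swap := by
  intro he
  have hq := q.2
  rw [Prod.ext_iff] at he
  simp only [Prod.fst_swap, Prod.snd_swap] at he
  rw [← he.1, ← he.2] at hq
  exact absurd hq (lt_irrefl _)

lemma antisym_mem_span {v : Vec n} (hv : ∀ i j : Fin n, v (i, j) + v (j, i) = 0) :
    v ∈ Submodule.span ℝ (Set.range (bvec n)) := by
  have hrep : v = ∑ q : {q : Fin n × Fin n // q.1 < q.2}, v q.1 • bvec n q := by
    funext p
    obtain ⟨a, b⟩ := p
    have hsum : (∑ q : {q : Fin n × Fin n // q.1 < q.2}, v q.1 • bvec n q) (a, b)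
        = ∑ q : {q : Fin n × Fin n // q.1 < q.2}, v q.1 * bvec n q (a, b) := by
      simp [Finset.sum_apply]
    rw [hsum]
    rcases lt_trichotomy a b with h | h | h
    · rw [Finset.sum_eq_single ⟨(a, b), h⟩]
      · simp [bvec]
      · intro q _ hq
        have h1 : (a, b) ≠ q.1 := fun he => hq (Subtype.ext he.symm)
        simp [bvec, h1, ne_swap_of_lt h q]
      · simp
    · subst h
      have hp0 : v (a, a) = 0 := by have := hv a a; linarith
      rw [Finset.sum_eq_zero, hp0]
      intro q _
      simp [bvec, ne_fst_of_eq q, ne_swap_of_eq q]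
    · rw [Finset.sum_eq_single ⟨(b, a), h⟩]
      · have : ((a, b) : Fin n × Fin n) = ((b, a) : Fin n × Fin n).swap := rfl
        have hne : ((a, b) : Fin n × Fin n) ≠ (b, a) := by
          intro he; rw [Prod.mk.injEq] at he; rw [he.1] at h; exact absurd h (lt_irrefl _)
        have hba := hv b a
        simp only [bvec]
        rw [if_neg hne, if_pos (show ((a, b) : Fin n × Fin n) = ((b, a) : Fin n × Fin n).swap from rfl)]
        linarith
      · intro q _ hq
        have h2 : (a, b) ≠ q.1.swap := by
          intro he
          apply hq
          apply Subtype.ext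
          rw [Prod.ext_iff] at he
          simp only [Prod.fst_swap, Prod.snd_swap] at he
          exact Prod.ext he.2.symm he.1.symm
        simp [bvec, ne_fst_of_gt h q, h2]
      · simp
  rw [hrep]
  exact Submodule.sum_mem _ fun q _ =>
    Submodule.smul_mem _ _ (Submodule.subset_span ⟨q, rfl⟩)

lemma bvec_linearIndependent : LinearIndependent ℝ (bvec n) := by
  rw [Fintype.linearIndependent_iff]
  intro c hc q
  have := congrFun hc q.1
  obtain ⟨⟨a, b⟩, h⟩ := q
  rw [Finset.sum_apply] at this
  rw [Finset.sum_eq_single (⟨(a, b), h⟩ : {q : Fin n × Fin n // q.1 < q.2})] at this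
  · simpa [bvec] using this
  · intro r _ hr
    have h1 : (a, b) ≠ r.1 := fun he => hr (Subtype.ext he.symm)
    simp [bvec, h1, ne_swap_of_lt h r]
  · simp

open Classical in
noncomputable def linRel (n : ℕ) (f : Fin n → ℝ) : Finset (Fin n × Fin n) :=
  Finset.univ.filter (fun p => f p.1 < f p.2)

lemma mem_linRel {f : Fin n → ℝ} {p : Fin n × Fin n} : p ∈ linRel n f ↔ f p.1 < f p.2 := by
  simp [linRel]

lemma chi_linRel (f : Fin n → ℝ) (p : Fin n × Fin n) :
    chi (linRel n f) p = if f p.1 < f p.2 then 1 else 0 := by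
  simp [chi, mem_linRel]

lemma linRel_isLinear {f : Fin n → ℝ} (hf : Function.Injective f) :
    IsLinearOrderRel (linRel n f) := by
  refine ⟨⟨fun i j h => ?_, fun i j k h1 h2 => ?_⟩, fun i j hij => ?_⟩
  · simp only [mem_linRel] at *; exact not_lt.2 h.le
  · simp only [mem_linRel] at *; exact h1.trans h2
  · simp only [mem_linRel]
    rcases lt_or_gt_of_ne (fun h => hij (hf h)) with h | h
    · exact Or.inl h
    · exact Or.inr h

lemma chi_mem (f : Fin n → ℝ) (hf : Function.Injective f) :
    chi (linRel n f) ∈ {x : Vec n | ∃ R, IsLinearOrderRel R ∧ x = chi R} :=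
  ⟨linRel n f, linRel_isLinear hf, rfl⟩

def f1 (n : ℕ) (i j : Fin n) : Fin n → ℝ :=
  fun a => if a = i then (n : ℝ) else if a = j then (n : ℝ) + 1 else (a : ℕ)

def f2 (n : ℕ) (i j : Fin n) : Fin n → ℝ :=
  fun a => if a = i then (n : ℝ) + 1 else if a = j then (n : ℝ) else (a : ℕ)

lemma fin_cast_lt (a : Fin n) : ((a : ℕ) : ℝ) < n := by exact_mod_cast a.2

lemma f1_inj (i j : Fin n) (hij : i ≠ j) : Function.Injective (f1 n i j) := by
  intro a b h
  have hva := fin_cast_lt a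
  have hvb := fin_cast_lt b
  unfold f1 at h
  split_ifs at h <;> subst_vars <;>
    first
      | rfl
      | (exfalso; linarith)
      | (exact Fin.ext (by exact_mod_cast h))

lemma f2_inj (i j : Fin n) (hij : i ≠ j) : Function.Injective (f2 n i j) := by
  intro a b h
  have hva := fin_cast_lt a
  have hvb := fin_cast_lt b
  unfold f2 at h
  split_ifs at h <;> subst_vars <;>
    first
      | rfl
      | (exfalso; linarith)
      | (exact Fin.ext (by exact_mod_cast h))

lemma diff_eq (i j : Fin n) (hij : i < j) :
    chi (linRel n (f1 n i j)) - chi (linRel n (f2 n i j)) = bvec n ⟨(i, j), hij⟩ := by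
  have hne : i ≠ j := ne_of_lt hij
  funext p
  obtain ⟨a, b⟩ := p
  have hva := fin_cast_lt a
  have hvb := fin_cast_lt b
  simp only [Pi.sub_apply, chi_linRel, bvec, f1, f2, Prod.swap_prod_mk, Prod.mk.injEq]
  by_cases hai : a = i <;> by_cases haj : a = j <;> by_cases hbi : b = i <;>
    by_cases hbj : b = j <;> subst_vars <;> simp_all <;> split_ifs <;> norm_num <;>
    linarith [fin_cast_lt a, fin_cast_lt b, a.2, b.2]

def S (n : ℕ) : Set (Vec n) := {x | ∃ R, IsLinearOrderRel R ∧ x = chi R}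

lemma chi_pair_sum {R : Finset (Fin n × Fin n)} (hR : IsLinearOrderRel R) (i j : Fin n) :
    chi R (i, j) + chi R (j, i) = if i = j then 0 else 1 := by
  by_cases h : i = j
  · subst h
    have hni : (i, i) ∉ R := fun hm => hR.1.1 i i hm hm
    simp [chi, hni]
  · rcases hR.2 i j h with hm | hm
    · have hn := hR.1.1 i j hm
      simp [chi, hm, hn, h]
    · have hn := hR.1.1 j i hm
      simp [chi, hm, hn, h]

lemma vectorSpan_eq : vectorSpan ℝ (S n) = Submodule.span ℝ (Set.range (bvec n)) := by
  apply le_antisymm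
  · rw [vectorSpan_def, Submodule.span_le]
    rintro v ⟨x, hx, y, hy, rfl⟩
    obtain ⟨R1, hR1, rfl⟩ := hx
    obtain ⟨R2, hR2, rfl⟩ := hy
    show chi R1 - chi R2 ∈ _
    apply antisym_mem_span
    intro i j
    have h1 := chi_pair_sum hR1 i j
    have h2 := chi_pair_sum hR2 i j
    simp only [Pi.sub_apply]
    linarith
  · rw [Submodule.span_le]
    rintro v ⟨q, rfl⟩
    obtain ⟨⟨i, j⟩, hij⟩ := q
    have hne : i ≠ j := ne_of_lt hij
    rw [← diff_eq i j hij]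
    exact vsub_mem_vectorSpan ℝ (chi_mem _ (f1_inj i j hne)) (chi_mem _ (f2_inj i j hne))

lemma card_lt_pairs : Fintype.card {q : Fin n × Fin n // q.1 < q.2} = n * (n - 1) / 2 := by
  rw [Fintype.card_subtype]
  have h1 : (#(Finset.univ.filter fun q : Fin n × Fin n => q.1 < q.2) : ℕ)
      = ∑ q : Fin n × Fin n, if q.1 < q.2 then (1 : ℕ) else 0 := by
    simpa using Finset.natCast_card_filter (fun q : Fin n × Fin n => q.1 < q.2) Finset.univ
  rw [h1, Fintype.sum_prod_type_right]
  have h2 : ∀ b : Fin n, (∑ a : Fin n, if (a, b).1 < (a, b).2 then (1 : ℕ) else 0) = (b : ℕ) := by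
    intro b
    have : (∑ a : Fin n, if (a, b).1 < (a, b).2 then (1 : ℕ) else 0)
        = #(Finset.univ.filter fun a : Fin n => a < b) := by
      simpa using (Finset.natCast_card_filter (fun a : Fin n => a < b) Finset.univ).symm
    rw [this]
    have : (Finset.univ.filter fun a : Fin n => a < b) = Finset.Iio b := by
      ext a; simp
    rw [this, Fin.card_Iio]
  calc (∑ b : Fin n, ∑ a : Fin n, if (a, b).1 < (a, b).2 then (1 : ℕ) else 0)
      = ∑ b : Fin n, (b : ℕ) := by exact Finset.sum_congr rfl fun b _ => h2 b
    _ = ∑ b ∈ Finset.range n, b := Fin.sum_univ_eq_sum_range (fun i => i) n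
    _ = n * (n - 1) / 2 := Finset.sum_range_id n

end PLOaux

theorem plo_dimension (n : ℕ) (hn : 2 ≤ n) :
    adim (PLO n) = ((n * (n - 1) / 2 : ℕ) : ℤ) := by
  classical
  have hinj : Function.Injective (fun a : Fin n => ((a : ℕ) : ℝ)) :=
    fun a b h => Fin.ext (Nat.cast_injective h)
  have hmem : chi (PLOaux.linRel n _) ∈ PLO n :=
    subset_convexHull ℝ _ (PLOaux.chi_mem _ hinj)
  have hPLO : PLO n ≠ ∅ := Set.nonempty_iff_ne_empty.1 ⟨_, hmem⟩
  rw [adim, if_neg hPLO]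
  have h1 : affineSpan ℝ (PLO n) = affineSpan ℝ (PLOaux.S n) := affineSpan_convexHull _
  rw [h1, direction_affineSpan, PLOaux.vectorSpan_eq,
    finrank_span_eq_card PLOaux.bvec_linearIndependent, PLOaux.card_lt_pairs]
end

section
/- Let A, B be disjoint subsets of Arcs(n) with A ∪ B ≠ ∅ and β ∈ {−1,0,1}. If the primary inequality ∑_{a∈A} x_a − ∑_{b∈B} x_b ≤ β is valid for the semiorder polytope PSO_n, then: (1) β ≥ 0, and if A ≠ ∅ then β = 1; (2) A satisfies Condition C1; (3) A and B satisfy Condition C2; (4) A and B satisfy Condition C4. If moreover the inequality is valid for the interval order polytope PIO_n, then A and B satisfy Condition C3. -/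
open Finset

lemma sum_ite_card {n : ℕ} (S : Finset (Fin n × Fin n)) :
    ∑ p : Fin n × Fin n, (if p ∈ S then (1:ℝ) else 0) = S.card := by
  simp [Finset.sum_ite_mem]

lemma lhs_chi {n : ℕ} (A B R : Finset (Fin n × Fin n)) :
    lhs (primCoeff A B) (chi R) = ((A ∩ R).card : ℝ) - ((B ∩ R).card : ℝ) := by
  unfold lhs primCoeff chi
  rw [← sum_ite_card (A ∩ R), ← sum_ite_card (B ∩ R), ← Finset.sum_sub_distrib]
  apply Finset.sum_congr rfl
  intro p _
  by_cases hA : p ∈ A <;> by_cases hB : p ∈ B <;> by_cases hR : p ∈ R <;>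
    simp [hA, hB, hR, Finset.mem_inter]

noncomputable def soRel {n : ℕ} (f : Fin n → ℝ) : Finset (Fin n × Fin n) :=
  Finset.univ.filter fun p : Fin n × Fin n => f p.1 + 1 < f p.2

lemma mem_soRel {n : ℕ} (f : Fin n → ℝ) (x y : Fin n) :
    (x, y) ∈ soRel f ↔ f x + 1 < f y := by simp [soRel]

lemma chi_soRel_mem_PSO {n : ℕ} (f : Fin n → ℝ) : chi (soRel f) ∈ PSO n :=
  subset_convexHull ℝ _ ⟨soRel f, ⟨f, fun i j => by simp [soRel]⟩, rfl⟩

noncomputable def ioRel {n : ℕ} (f g : Fin n → ℝ) : Finset (Fin n × Fin n) :=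
  Finset.univ.filter fun p : Fin n × Fin n => g p.1 < f p.2

lemma mem_ioRel {n : ℕ} (f g : Fin n → ℝ) (x y : Fin n) :
    (x, y) ∈ ioRel f g ↔ g x < f y := by simp [ioRel]

lemma chi_ioRel_mem_PIO {n : ℕ} (f g : Fin n → ℝ) (hfg : ∀ i, f i ≤ g i) :
    chi (ioRel f g) ∈ PIO n :=
  subset_convexHull ℝ _ ⟨ioRel f g, ⟨f, g, hfg, fun i j => by simp [ioRel]⟩, rfl⟩

lemma two_le_of_valid {n : ℕ} {A B : Finset (Fin n × Fin n)} {β : ℝ}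
    (R : Finset (Fin n × Fin n)) (hBR : B ∩ R = ∅)
    (a b : Fin n × Fin n) (ha : a ∈ A ∩ R) (hb : b ∈ A ∩ R) (hab : a ≠ b)
    (hle : lhs (primCoeff A B) (chi R) ≤ β) : 2 ≤ β := by
  rw [lhs_chi, hBR] at hle
  have h2 : ({a, b} : Finset (Fin n × Fin n)) ⊆ A ∩ R := by
    intro x hx; simp at hx; rcases hx with rfl | rfl <;> assumption
  have hc := Finset.card_le_card h2
  rw [Finset.card_pair hab] at hc
  simp at hle
  calc (2:ℝ) ≤ ((A ∩ R).card : ℝ) := by exact_mod_cast hc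
    _ ≤ β := by linarith



set_option maxHeartbeats 1000000 in
lemma memC4 {n : ℕ} (B : Finset (Fin n × Fin n)) (i j k : Fin n)
    (hij : i ≠ j) (hjk : j ≠ k) (hik : i ≠ k) (x y : Fin n) :
    ((if x = i then (0:ℝ) else if x = j then 11/10 else if x = k then 22/10
        else if (i, x) ∈ B then 9/10 else 14/10) + 1 <
      (if y = i then (0:ℝ) else if y = j then 11/10 else if y = k then 22/10
        else if (i, y) ∈ B then 9/10 else 14/10)) ↔
    ((x = i ∧ y = j) ∨ (x = i ∧ y = k) ∨ (x = j ∧ y = k) ∨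
     (x = i ∧ y ≠ i ∧ y ≠ j ∧ y ≠ k ∧ (i, y) ∉ B) ∨
     (x ≠ i ∧ x ≠ j ∧ x ≠ k ∧ (i, x) ∈ B ∧ y = k)) := by
  by_cases h1 : x = i <;> by_cases h2 : x = j <;> by_cases h3 : x = k <;>
    by_cases h4 : (i, x) ∈ B <;> by_cases h5 : y = i <;> by_cases h6 : y = j <;>
    by_cases h7 : y = k <;> by_cases h8 : (i, y) ∈ B <;>
    simp_all <;> norm_num

set_option maxHeartbeats 1000000 in
lemma memC3 {n : ℕ} (i j k : Fin n)
    (hij : i ≠ j) (hjk : j ≠ k) (hik : i ≠ k) (x y : Fin n) :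
    ((if x = i then (0:ℝ) else if x = j then 2 else if x = k then 4 else 4) <
      (if y = i then (0:ℝ) else if y = j then 2 else if y = k then 4 else 0)) ↔
    ((x = i ∧ y = j) ∨ (x = i ∧ y = k) ∨ (x = j ∧ y = k)) := by
  by_cases h1 : x = i <;> by_cases h2 : x = j <;> by_cases h3 : x = k <;>
    by_cases h4 : y = i <;> by_cases h5 : y = j <;> by_cases h6 : y = k <;>
    simp_all <;> norm_num

set_option maxHeartbeats 1000000 in
lemma memSingle {n : ℕ} (i j : Fin n) (hij : i ≠ j) (x y : Fin n) :
    ((if x = i then (0:ℝ) else if x = j then 2 else 1) + 1 <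
      (if y = i then (0:ℝ) else if y = j then 2 else 1)) ↔ (x = i ∧ y = j) := by
  by_cases h1 : x = i <;> by_cases h2 : x = j <;> by_cases h3 : y = i <;>
    by_cases h4 : y = j <;> simp_all <;> norm_num

set_option maxHeartbeats 1000000 in
lemma memC1a {n : ℕ} (i j l : Fin n) (hij : i ≠ j) (hil : i ≠ l) (x y : Fin n) :
    ((if x = i then (0:ℝ) else if x = j ∨ x = l then 2 else 1) + 1 <
      (if y = i then (0:ℝ) else if y = j ∨ y = l then 2 else 1)) ↔
    (x = i ∧ (y = j ∨ y = l)) := by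
  by_cases h1 : x = i <;> by_cases h2 : x = j <;> by_cases h3 : x = l <;>
    by_cases h4 : y = i <;> by_cases h5 : y = j <;> by_cases h6 : y = l <;>
    simp_all <;> norm_num

set_option maxHeartbeats 1000000 in
lemma memC1b {n : ℕ} (i k j : Fin n) (hij : i ≠ j) (hkj : k ≠ j) (x y : Fin n) :
    ((if x = i ∨ x = k then (0:ℝ) else if x = j then 2 else 1) + 1 <
      (if y = i ∨ y = k then (0:ℝ) else if y = j then 2 else 1)) ↔
    ((x = i ∨ x = k) ∧ y = j) := by
  by_cases h1 : x = i <;> by_cases h2 : x = k <;> by_cases h3 : x = j <;>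
    by_cases h4 : y = i <;> by_cases h5 : y = k <;> by_cases h6 : y = j <;>
    simp_all <;> norm_num


set_option maxHeartbeats 1000000 in
lemma memC2 {n : ℕ} (i j k l : Fin n)
    (hij : i ≠ j) (hik : i ≠ k) (hil : i ≠ l) (hjk : j ≠ k) (hjl : j ≠ l) (hkl : k ≠ l)
    (x y : Fin n) :
    ((if x = i then (0:ℝ) else if x = k then 6/10 else if x = j then 15/10
        else if x = l then 2 else 1) + 1 <
      (if y = i then (0:ℝ) else if y = k then 6/10 else if y = j then 15/10
        else if y = l then 2 else 1)) ↔
    ((x = i ∧ y = j) ∨ (x = i ∧ y = l) ∨ (x = k ∧ y = l)) := by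
  by_cases h1 : x = i <;> by_cases h2 : x = k <;> by_cases h3 : x = j <;>
    by_cases h4 : x = l <;> by_cases h5 : y = i <;> by_cases h6 : y = k <;>
    by_cases h7 : y = j <;> by_cases h8 : y = l <;>
    simp_all <;> norm_num

theorem valid_primary_pso_necessary (n : ℕ) (hn : 2 ≤ n)
    (A B : Finset (Fin n × Fin n)) (hdisj : Disjoint A B)
    (hA : InArcs A) (hB : InArcs B) (hne : (A ∪ B).Nonempty)
    (β : ℝ) (hβ : β = -1 ∨ β = 0 ∨ β = 1)
    (hvalid : Valid (primCoeff A B) β (PSO n)) :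
    (0 ≤ β ∧ (A.Nonempty → β = 1)) ∧ C1 A ∧ C2 A B ∧ C4 A B ∧
    (Valid (primCoeff A B) β (PIO n) → C3 A B) := by
  classical
  have hβ0 : 0 ≤ β := by
    have h := hvalid _ (chi_soRel_mem_PSO (fun _ : Fin n => (0:ℝ)))
    rw [lhs_chi] at h
    have hE : soRel (fun _ : Fin n => (0:ℝ)) = ∅ := by
      ext ⟨x, y⟩; simp [mem_soRel]
    rw [hE] at h; simpa using h
  have hβ1 : A.Nonempty → β = 1 := by
    rintro ⟨⟨i, j⟩, hij⟩
    have hijne : i ≠ j := hA _ hij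
    set f : Fin n → ℝ := fun x => if x = i then 0 else if x = j then 2 else 1 with hf
    have hmem : ∀ x y : Fin n, ((x, y) ∈ soRel f ↔ x = i ∧ y = j) := by
      intro x y
      rw [mem_soRel]
      simp only [hf]
      exact memSingle i j hijne x y
    have h := hvalid _ (chi_soRel_mem_PSO f)
    rw [lhs_chi] at h
    have hAR : A ∩ soRel f = {(i, j)} := by
      ext ⟨x, y⟩
      simp only [Finset.mem_inter, hmem, Finset.mem_singleton, Prod.mk.injEq]
      constructor
      · rintro ⟨_, h1, h2⟩; exact ⟨h1, h2⟩
      · rintro ⟨h1, h2⟩; rw [h1, h2]; exact ⟨hij, rfl, rfl⟩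
    have hBR : B ∩ soRel f = ∅ := by
      rw [Finset.eq_empty_iff_forall_notMem]
      rintro ⟨x, y⟩ hm
      rw [Finset.mem_inter, hmem] at hm
      obtain ⟨hxB, h1, h2⟩ := hm
      rw [h1, h2] at hxB
      exact (Finset.disjoint_left.mp hdisj hij) hxB
    rw [hAR, hBR] at h
    simp at h
    rcases hβ with rfl | rfl | rfl <;> [linarith; linarith; rfl]
  refine ⟨⟨hβ0, hβ1⟩, ?_, ?_, ?_, ?_⟩
  · -- C1
    intro i j k l hij hkl hne2
    have hβeq : β = 1 := hβ1 ⟨_, hij⟩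
    constructor
    · rintro rfl
      have hjl : j ≠ l := by rintro rfl; exact hne2 rfl
      have h1' : i ≠ j := hA _ hij
      have h2' : i ≠ l := hA _ hkl
      set f : Fin n → ℝ := fun x => if x = i then 0 else if x = j ∨ x = l then 2 else 1 with hf
      have hmem : ∀ x y : Fin n, ((x, y) ∈ soRel f ↔ x = i ∧ (y = j ∨ y = l)) := by
        intro x y
        rw [mem_soRel]
        simp only [hf]
        exact memC1a i j l h1' h2' x y
      have hBR : B ∩ soRel f = ∅ := by
        rw [Finset.eq_empty_iff_forall_notMem]
        rintro ⟨x, y⟩ hm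
        rw [Finset.mem_inter, hmem] at hm
        obtain ⟨hxB, h1, h2 | h2⟩ := hm <;> rw [h1, h2] at hxB
        · exact (Finset.disjoint_left.mp hdisj hij) hxB
        · exact (Finset.disjoint_left.mp hdisj hkl) hxB
      have h2le := two_le_of_valid (A := A) (β := β) _ hBR (i, j) (i, l)
        (Finset.mem_inter.mpr ⟨hij, (hmem i j).mpr ⟨rfl, Or.inl rfl⟩⟩)
        (Finset.mem_inter.mpr ⟨hkl, (hmem i l).mpr ⟨rfl, Or.inr rfl⟩⟩)
        (by simp [hjl]) (hvalid _ (chi_soRel_mem_PSO f))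
      linarith
    · rintro rfl
      have hik : i ≠ k := by rintro rfl; exact hne2 rfl
      have h1' : i ≠ j := hA _ hij
      have h2' : k ≠ j := hA _ hkl
      set f : Fin n → ℝ := fun x => if x = i ∨ x = k then 0 else if x = j then 2 else 1 with hf
      have hmem : ∀ x y : Fin n, ((x, y) ∈ soRel f ↔ (x = i ∨ x = k) ∧ y = j) := by
        intro x y
        rw [mem_soRel]
        simp only [hf]
        exact memC1b i k j h1' h2' x y
      have hBR : B ∩ soRel f = ∅ := by
        rw [Finset.eq_empty_iff_forall_notMem]
        rintro ⟨x, y⟩ hm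
        rw [Finset.mem_inter, hmem] at hm
        obtain ⟨hxB, h1 | h1, h2⟩ := hm <;> rw [h1, h2] at hxB
        · exact (Finset.disjoint_left.mp hdisj hij) hxB
        · exact (Finset.disjoint_left.mp hdisj hkl) hxB
      have h2le := two_le_of_valid (A := A) (β := β) _ hBR (i, j) (k, j)
        (Finset.mem_inter.mpr ⟨hij, (hmem i j).mpr ⟨Or.inl rfl, rfl⟩⟩)
        (Finset.mem_inter.mpr ⟨hkl, (hmem k j).mpr ⟨Or.inr rfl, rfl⟩⟩)
        (by simp [hik]) (hvalid _ (chi_soRel_mem_PSO f))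
      linarith
  · -- C2
    intro i j k l hij hkl hij' hik hil hjk hjl hkl'
    by_contra hilB
    have hβeq : β = 1 := hβ1 ⟨_, hij⟩
    set f : Fin n → ℝ := fun x => if x = i then 0 else if x = k then 6/10
      else if x = j then 15/10 else if x = l then 2 else 1 with hf
    have hmem : ∀ x y : Fin n,
        ((x, y) ∈ soRel f ↔ (x = i ∧ y = j) ∨ (x = i ∧ y = l) ∨ (x = k ∧ y = l)) := by
      intro x y
      rw [mem_soRel]
      simp only [hf]
      exact memC2 i j k l hij' hik hil hjk hjl hkl' x y
    have hBR : B ∩ soRel f = ∅ := by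
      rw [Finset.eq_empty_iff_forall_notMem]
      rintro ⟨x, y⟩ hm
      rw [Finset.mem_inter, hmem] at hm
      obtain ⟨hxB, ⟨h1, h2⟩ | ⟨h1, h2⟩ | ⟨h1, h2⟩⟩ := hm <;> rw [h1, h2] at hxB
      · exact (Finset.disjoint_left.mp hdisj hij) hxB
      · exact hilB hxB
      · exact (Finset.disjoint_left.mp hdisj hkl) hxB
    have h2le := two_le_of_valid (A := A) (β := β) _ hBR (i, j) (k, l)
      (Finset.mem_inter.mpr ⟨hij, (hmem i j).mpr (Or.inl ⟨rfl, rfl⟩)⟩)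
      (Finset.mem_inter.mpr ⟨hkl, (hmem k l).mpr (Or.inr (Or.inr ⟨rfl, rfl⟩))⟩)
      (by simp [hik]) (hvalid _ (chi_soRel_mem_PSO f))
    linarith
  · -- C4
    intro i j k hij hjk hij' hjk' hik
    by_contra hcon
    push_neg at hcon
    obtain ⟨hikB, hp⟩ := hcon
    have hβeq : β = 1 := hβ1 ⟨_, hij⟩
    set f : Fin n → ℝ := fun x => if x = i then 0 else if x = j then 11/10
      else if x = k then 22/10 else if (i, x) ∈ B then 9/10 else 14/10 with hf
    have hmem : ∀ x y : Fin n, ((x, y) ∈ soRel f ↔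
        (x = i ∧ y = j) ∨ (x = i ∧ y = k) ∨ (x = j ∧ y = k) ∨
        (x = i ∧ y ≠ i ∧ y ≠ j ∧ y ≠ k ∧ (i, y) ∉ B) ∨
        (x ≠ i ∧ x ≠ j ∧ x ≠ k ∧ (i, x) ∈ B ∧ y = k)) := by
      intro x y
      rw [mem_soRel]
      simp only [hf]
      exact memC4 B i j k hij' hjk' hik x y
    have hBR : B ∩ soRel f = ∅ := by
      rw [Finset.eq_empty_iff_forall_notMem]
      rintro ⟨x, y⟩ hm
      rw [Finset.mem_inter, hmem] at hm
      obtain ⟨hxB, hc⟩ := hm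
      rcases hc with ⟨h1, h2⟩ | ⟨h1, h2⟩ | ⟨h1, h2⟩ | ⟨h1, _, _, _, hyB⟩ |
        ⟨hxi, hxj, hxk, hixB, h2⟩
      · rw [h1, h2] at hxB; exact (Finset.disjoint_left.mp hdisj hij) hxB
      · rw [h1, h2] at hxB; exact hikB hxB
      · rw [h1, h2] at hxB; exact (Finset.disjoint_left.mp hdisj hjk) hxB
      · rw [h1] at hxB; exact hyB hxB
      · rw [h2] at hxB; exact hp x hxi hxj hxk hixB hxB
    have h2le := two_le_of_valid (A := A) (β := β) _ hBR (i, j) (j, k)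
      (Finset.mem_inter.mpr ⟨hij, (hmem i j).mpr (Or.inl ⟨rfl, rfl⟩)⟩)
      (Finset.mem_inter.mpr ⟨hjk, (hmem j k).mpr (Or.inr (Or.inr (Or.inl ⟨rfl, rfl⟩)))⟩)
      (by simp [hij']) (hvalid _ (chi_soRel_mem_PSO f))
    linarith
  · -- C3 from PIO-validity
    intro hvalidIO i j k hij hjk hij' hjk' hik
    by_contra hikB
    have hβeq : β = 1 := hβ1 ⟨_, hij⟩
    set f : Fin n → ℝ := fun x => if x = i then 0 else if x = j then 2
      else if x = k then 4 else 0 with hf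
    set g : Fin n → ℝ := fun x => if x = i then 0 else if x = j then 2
      else if x = k then 4 else 4 with hg
    have hfg : ∀ x, f x ≤ g x := by
      intro x; simp only [hf, hg]; split_ifs <;> norm_num
    have hmem : ∀ x y : Fin n, ((x, y) ∈ ioRel f g ↔
        (x = i ∧ y = j) ∨ (x = i ∧ y = k) ∨ (x = j ∧ y = k)) := by
      intro x y
      rw [mem_ioRel]
      simp only [hf, hg]
      exact memC3 i j k hij' hjk' hik x y
    have hBR : B ∩ ioRel f g = ∅ := by
      rw [Finset.eq_empty_iff_forall_notMem]
      rintro ⟨x, y⟩ hm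
      rw [Finset.mem_inter, hmem] at hm
      obtain ⟨hxB, ⟨h1, h2⟩ | ⟨h1, h2⟩ | ⟨h1, h2⟩⟩ := hm <;> rw [h1, h2] at hxB
      · exact (Finset.disjoint_left.mp hdisj hij) hxB
      · exact hikB hxB
      · exact (Finset.disjoint_left.mp hdisj hjk) hxB
    have h2le := two_le_of_valid (A := A) (β := β) _ hBR (i, j) (j, k)
      (Finset.mem_inter.mpr ⟨hij, (hmem i j).mpr (Or.inl ⟨rfl, rfl⟩)⟩)
      (Finset.mem_inter.mpr ⟨hjk, (hmem j k).mpr (Or.inr (Or.inr ⟨rfl, rfl⟩))⟩)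
      (by simp [hij']) (hvalidIO _ (chi_ioRel_mem_PIO f g hfg))
    linarith
end

section
/- Let P_n be any one of the partial order polytope PPO_n, the interval order polytope PIO_n, or the semiorder polytope PSO_n, and let A, B be disjoint subsets of Arcs(n) with A ∪ B ≠ ∅ and β ∈ {−1,0,1}. Suppose the primary inequality ∑_{a∈A} x_a − ∑_{b∈B} x_b ≤ β defines a facet of P_n. Then: (1) if β = 0, then A = ∅ and B is a singleton {(i,j)}, i.e. the inequality is a nonnegativity inequality −x_{ij} ≤ 0; (2) if β = 1, then |A| ≥ 2. -/
open Finset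

namespace FacetAux

variable {n : ℕ}

def Asym (R : Finset (Fin n × Fin n)) : Prop := ∀ i j : Fin n, (i, j) ∈ R → (j, i) ∉ R

lemma asym_PO {R : Finset (Fin n × Fin n)} (h : IsPartialOrderRel R) : Asym R := h.1

lemma asym_IO {R : Finset (Fin n × Fin n)} (h : IsIntervalOrderRel R) : Asym R := by
  obtain ⟨f, g, hfg, hR⟩ := h
  intro i j hij hji
  rw [hR i j] at hij
  rw [hR j i] at hji
  have h1 := hfg i
  have h2 := hfg j
  linarith

lemma asym_SO {R : Finset (Fin n × Fin n)} (h : IsSemiorderRel R) : Asym R := by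
  obtain ⟨f, hR⟩ := h
  intro i j hij hji
  rw [hR i j] at hij
  rw [hR j i] at hji
  linarith

lemma eval_linear (p : Fin n × Fin n) : IsLinearMap ℝ (fun x : Vec n => x p) :=
  ⟨fun _ _ => rfl, fun _ _ => rfl⟩

lemma pair_linear (p q : Fin n × Fin n) : IsLinearMap ℝ (fun x : Vec n => x p + x q) :=
  ⟨fun _ _ => by simp [Pi.add_apply]; ring, fun c x => by simp [Pi.smul_apply]; ring⟩

def fsing (p : Fin n × Fin n) : Fin n → ℝ := fun k => if k = p.1 then 0 else if k = p.2 then 2 else 1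

lemma fsing_spec {p : Fin n × Fin n} (hp : p.1 ≠ p.2) (u v : Fin n) :
    (u, v) ∈ ({p} : Finset (Fin n × Fin n)) ↔ fsing p u + 1 < fsing p v := by
  obtain ⟨i, j⟩ := p
  simp only [mem_singleton, Prod.mk.injEq, fsing]
  simp only at hp
  constructor
  · rintro ⟨rfl, rfl⟩
    rw [if_pos rfl, if_neg (Ne.symm hp), if_pos rfl]
    norm_num
  · intro h
    by_cases hu : u = i
    · by_cases hv : v = i
      · rw [if_pos hu, if_pos hv] at h; norm_num at h
      · by_cases hv2 : v = j
        · exact ⟨hu, hv2⟩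
        · rw [if_pos hu, if_neg hv, if_neg hv2] at h; norm_num at h
    · rw [if_neg hu] at h
      by_cases hu2 : u = j
      · rw [if_pos hu2] at h
        split_ifs at h <;> norm_num at h
      · rw [if_neg hu2] at h
        split_ifs at h <;> norm_num at h

lemma singleton_SO {p : Fin n × Fin n} (hp : p.1 ≠ p.2) :
    IsSemiorderRel ({p} : Finset (Fin n × Fin n)) :=
  ⟨fsing p, fun u v => fsing_spec hp u v⟩

lemma singleton_IO {p : Fin n × Fin n} (hp : p.1 ≠ p.2) :
    IsIntervalOrderRel ({p} : Finset (Fin n × Fin n)) :=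
  ⟨fsing p, fun k => fsing p k + 1, fun k => le_add_of_nonneg_right zero_le_one, fun u v => fsing_spec hp u v⟩

lemma singleton_PO {p : Fin n × Fin n} (hp : p.1 ≠ p.2) :
    IsPartialOrderRel ({p} : Finset (Fin n × Fin n)) := by
  obtain ⟨i0, j0⟩ := p
  simp only at hp
  constructor
  · intro i j hij hji
    simp only [mem_singleton, Prod.mk.injEq] at hij hji
    obtain ⟨rfl, rfl⟩ := hij
    obtain ⟨h1, h2⟩ := hji
    exact hp h2
  · intro i j k hij hjk
    simp only [mem_singleton, Prod.mk.injEq] at hij hjk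
    obtain ⟨rfl, rfl⟩ := hij
    obtain ⟨h1, h2⟩ := hjk
    exact absurd h1.symm hp

lemma empty_PO : IsPartialOrderRel (∅ : Finset (Fin n × Fin n)) := ⟨by simp, by simp⟩
lemma empty_IO : IsIntervalOrderRel (∅ : Finset (Fin n × Fin n)) :=
  ⟨0, 0, fun _ => le_refl _, by simp⟩
lemma empty_SO : IsSemiorderRel (∅ : Finset (Fin n × Fin n)) := ⟨0, by simp⟩

end FacetAux
namespace FacetAux

variable {n : ℕ}

lemma chi_props {R : Finset (Fin n × Fin n)} (hR : Asym R) :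
    (∀ p, 0 ≤ chi R p) ∧ (∀ i j : Fin n, chi R (i, j) + chi R (j, i) ≤ 1) ∧
    (∀ i : Fin n, chi R (i, i) = 0) := by
  refine ⟨fun p => ?_, fun i j => ?_, fun i => ?_⟩
  · unfold chi; split <;> norm_num
  · unfold chi
    by_cases h : (i, j) ∈ R
    · rw [if_pos h, if_neg (hR i j h)]; norm_num
    · rw [if_neg h]; split <;> norm_num
  · unfold chi
    rw [if_neg (fun h => hR i i h h)]

lemma struct_of (S : Set (Vec n)) (hAsym : ∀ x ∈ S, ∃ R, Asym R ∧ x = chi R)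
    (h0 : chi (∅ : Finset (Fin n × Fin n)) ∈ S)
    (h1 : ∀ p : Fin n × Fin n, p.1 ≠ p.2 → chi {p} ∈ S) :
    (∀ x ∈ convexHull ℝ S, (∀ p, 0 ≤ x p) ∧ (∀ i j : Fin n, x (i, j) + x (j, i) ≤ 1) ∧
      (∀ i : Fin n, x (i, i) = 0)) ∧
    chi (∅ : Finset (Fin n × Fin n)) ∈ convexHull ℝ S ∧
    (∀ p : Fin n × Fin n, p.1 ≠ p.2 → chi {p} ∈ convexHull ℝ S) := by
  refine ⟨fun x hx => ⟨fun p => ?_, fun i j => ?_, fun i => ?_⟩,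
    subset_convexHull ℝ S h0, fun p hp => subset_convexHull ℝ S (h1 p hp)⟩
  · refine convexHull_min ?_ (convex_halfSpace_ge (eval_linear p) 0) hx
    intro y hy
    obtain ⟨R, hR, rfl⟩ := hAsym y hy
    exact (chi_props hR).1 p
  · refine convexHull_min ?_ (convex_halfSpace_le (pair_linear (i, j) (j, i)) 1) hx
    intro y hy
    obtain ⟨R, hR, rfl⟩ := hAsym y hy
    exact (chi_props hR).2.1 i j
  · refine convexHull_min ?_ (convex_hyperplane (eval_linear (i, i)) 0) hx
    intro y hy
    obtain ⟨R, hR, rfl⟩ := hAsym y hy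
    exact (chi_props hR).2.2 i

lemma P_struct {P : Set (Vec n)} (hP : P = PPO n ∨ P = PIO n ∨ P = PSO n) :
    (∀ x ∈ P, (∀ p, 0 ≤ x p) ∧ (∀ i j : Fin n, x (i, j) + x (j, i) ≤ 1) ∧
      (∀ i : Fin n, x (i, i) = 0)) ∧
    chi (∅ : Finset (Fin n × Fin n)) ∈ P ∧
    (∀ p : Fin n × Fin n, p.1 ≠ p.2 → chi {p} ∈ P) := by
  rcases hP with rfl | rfl | rfl
  · exact struct_of _ (fun x ⟨R, hR, hx⟩ => ⟨R, asym_PO hR, hx⟩)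
      ⟨∅, empty_PO, rfl⟩ (fun p hp => ⟨{p}, singleton_PO hp, rfl⟩)
  · exact struct_of _ (fun x ⟨R, hR, hx⟩ => ⟨R, asym_IO hR, hx⟩)
      ⟨∅, empty_IO, rfl⟩ (fun p hp => ⟨{p}, singleton_IO hp, rfl⟩)
  · exact struct_of _ (fun x ⟨R, hR, hx⟩ => ⟨R, asym_SO hR, hx⟩)
      ⟨∅, empty_SO, rfl⟩ (fun p hp => ⟨{p}, singleton_SO hp, rfl⟩)

lemma lhs_prim (A B : Finset (Fin n × Fin n)) (x : Vec n) :
    lhs (primCoeff A B) x = ∑ p ∈ A, x p - ∑ p ∈ B, x p := by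
  unfold lhs primCoeff
  simp only [sub_mul, ite_mul, one_mul, zero_mul]
  rw [Finset.sum_sub_distrib, Finset.sum_ite_mem, Finset.sum_ite_mem,
    Finset.univ_inter, Finset.univ_inter]

lemma sum_chi_singleton (A : Finset (Fin n × Fin n)) (a : Fin n × Fin n) :
    ∑ p ∈ A, chi ({a} : Finset (Fin n × Fin n)) p = if a ∈ A then 1 else 0 := by
  unfold chi
  simp only [mem_singleton]
  rw [Finset.sum_ite_eq' A a (fun _ => (1 : ℝ))]

end FacetAux
namespace FacetAux

variable {n : ℕ}

def vanishOn (s : Set (Fin n × Fin n)) : Submodule ℝ (Vec n) where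
  carrier := {x | ∀ p ∈ s, x p = 0}
  add_mem' := by
    intro a b ha hb p hp
    simp only [Pi.add_apply, ha p hp, hb p hp, add_zero]
  zero_mem' := fun p _ => rfl
  smul_mem' := by
    intro c a ha p hp
    simp only [Pi.smul_apply, ha p hp, smul_zero]

lemma mem_vanishOn {s : Set (Fin n × Fin n)} {x : Vec n} :
    x ∈ vanishOn s ↔ ∀ p ∈ s, x p = 0 := Iff.rfl

lemma finrank_add_card_le (T : Finset (Fin n × Fin n)) (D : Submodule ℝ (Vec n))
    (hD : ∀ x ∈ D, ∀ p ∈ T, x p = 0) :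
    Module.finrank ℝ D + T.card ≤ n * n := by
  classical
  have hli : LinearIndependent ℝ (fun p : T => (Pi.single (p : Fin n × Fin n) 1 : Vec n)) := by
    have hb := (Pi.basisFun ℝ (Fin n × Fin n)).linearIndependent
    have heq : (fun p : T => (Pi.single (p : Fin n × Fin n) 1 : Vec n)) =
        (Pi.basisFun ℝ (Fin n × Fin n)) ∘ (Subtype.val : T → Fin n × Fin n) := by
      funext p
      simp [Pi.basisFun_apply]
    rw [heq]
    exact hb.comp _ Subtype.val_injective
  set E : Submodule ℝ (Vec n) :=
    Submodule.span ℝ (Set.range fun p : T => (Pi.single (p : Fin n × Fin n) 1 : Vec n)) with hEdef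
  have hE : Module.finrank ℝ E = T.card := by
    rw [hEdef, finrank_span_eq_card hli, Fintype.card_coe]
  have hEsupp : ∀ x ∈ E, ∀ q, q ∉ T → x q = 0 := by
    intro x hx
    have hle : E ≤ vanishOn ((T : Set (Fin n × Fin n))ᶜ) := by
      rw [hEdef, Submodule.span_le]
      rintro _ ⟨p, rfl⟩ q hq
      simp only [Set.mem_compl_iff, Finset.mem_coe] at hq
      have : q ≠ (p : Fin n × Fin n) := fun h => hq (h ▸ p.2)
      simp [Pi.single_apply, this]
    intro q hq
    exact hle hx q (by simpa using hq)
  have hinf : D ⊓ E = ⊥ := by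
    rw [Submodule.eq_bot_iff]
    intro x hx
    rw [Submodule.mem_inf] at hx
    funext q
    by_cases hq : q ∈ T
    · exact hD x hx.1 q hq
    · exact hEsupp x hx.2 q hq
  have hsum := Submodule.finrank_sup_add_finrank_inf_eq D E
  rw [hinf] at hsum
  simp only [finrank_bot, add_zero] at hsum
  have hle : Module.finrank ℝ ↥(D ⊔ E) ≤ Module.finrank ℝ (Vec n) := Submodule.finrank_le _
  have hVec : Module.finrank ℝ (Vec n) = n * n := by
    rw [Module.finrank_pi]
    simp [Fintype.card_prod, Fintype.card_fin]
  omega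

lemma adim_le (s : Set (Vec n)) (T : Finset (Fin n × Fin n)) (w : Vec n)
    (hs : ∀ x ∈ s, ∀ p ∈ T, x p = w p) : adim s ≤ (n * n : ℤ) - T.card := by
  have hTle : T.card ≤ n * n := by
    have := Finset.card_le_univ T
    simpa [Fintype.card_prod, Fintype.card_fin] using this
  by_cases hemp : s = ∅
  · rw [adim, if_pos hemp]; push_cast; omega
  · rw [adim, if_neg hemp]
    set W := AffineSubspace.mk' w (vanishOn (T : Set (Fin n × Fin n)))
    have hsub : s ⊆ (W : Set (Vec n)) := by
      intro x hx
      show x ∈ W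
      rw [AffineSubspace.mem_mk']
      intro p hp
      have : (x - w) p = 0 := by
        simp [hs x hx p (by simpa using hp)]
      simpa [vsub_eq_sub] using this
    have hdir : (affineSpan ℝ s).direction ≤ vanishOn (T : Set (Fin n × Fin n)) := by
      have h1 : affineSpan ℝ s ≤ W := affineSpan_le.mpr hsub
      have h2 := AffineSubspace.direction_le h1
      rwa [AffineSubspace.direction_mk'] at h2
    have h3 := finrank_add_card_le T _ (fun x hx p hp => hdir hx p (by simpa using hp))
    have h4 : Module.finrank ℝ (affineSpan ℝ s).direction + T.card ≤ n * n := h3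
    push_cast
    omega

lemma adim_P_ge {P : Set (Vec n)} (h0 : chi (∅ : Finset (Fin n × Fin n)) ∈ P)
    (h1 : ∀ p : Fin n × Fin n, p.1 ≠ p.2 → chi {p} ∈ P) :
    (n * n : ℤ) - n ≤ adim P := by
  classical
  have hne : P ≠ ∅ := fun h => by simp [h] at h0
  rw [adim, if_neg hne]
  set D := (affineSpan ℝ P).direction with hDdef
  have hmem : ∀ p : Fin n × Fin n, p.1 ≠ p.2 → (Pi.single p 1 : Vec n) ∈ D := by
    intro p hp
    have h01 : chi ({p} : Finset (Fin n × Fin n)) ∈ affineSpan ℝ P := subset_affineSpan ℝ P (h1 p hp)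
    have h00 : chi (∅ : Finset (Fin n × Fin n)) ∈ affineSpan ℝ P := subset_affineSpan ℝ P h0
    have hv := AffineSubspace.vsub_mem_direction h01 h00
    have heq : chi ({p} : Finset (Fin n × Fin n)) -ᵥ chi (∅ : Finset (Fin n × Fin n)) =
        (Pi.single p 1 : Vec n) := by
      funext q
      simp [vsub_eq_sub, chi, Pi.single_apply, Pi.sub_apply]
    rwa [heq] at hv
  set T : Finset (Fin n × Fin n) := Finset.univ.offDiag with hTdef
  have hli : LinearIndependent ℝ (fun p : T => (Pi.single (p : Fin n × Fin n) 1 : Vec n)) := by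
    have hb := (Pi.basisFun ℝ (Fin n × Fin n)).linearIndependent
    have heq : (fun p : T => (Pi.single (p : Fin n × Fin n) 1 : Vec n)) =
        (Pi.basisFun ℝ (Fin n × Fin n)) ∘ (Subtype.val : T → Fin n × Fin n) := by
      funext p
      simp [Pi.basisFun_apply]
    rw [heq]
    exact hb.comp _ Subtype.val_injective
  have hspan : Submodule.span ℝ
      (Set.range fun p : T => (Pi.single (p : Fin n × Fin n) 1 : Vec n)) ≤ D := by
    rw [Submodule.span_le]
    rintro _ ⟨p, rfl⟩
    have hp : (p : Fin n × Fin n) ∈ Finset.univ.offDiag := p.2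
    rw [Finset.mem_offDiag] at hp
    exact hmem _ hp.2.2
  have hrank := Submodule.finrank_mono hspan
  rw [finrank_span_eq_card hli, Fintype.card_coe] at hrank
  have hTcard : T.card = n * n - n := by
    rw [hTdef, Finset.offDiag_card]
    simp [Fintype.card_fin]
  rw [hTcard] at hrank
  have hnn : n ≤ n * n := by
    rcases Nat.eq_zero_or_pos n with h | h
    · simp [h]
    · exact Nat.le_mul_of_pos_left n h
  zify [hnn] at hrank
  push_cast at hrank ⊢
  linarith

end FacetAux
theorem facet_primary_beta (n : ℕ) (hn : 2 ≤ n) (P : Set (Vec n))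
    (hP : P = PPO n ∨ P = PIO n ∨ P = PSO n)
    (A B : Finset (Fin n × Fin n)) (hdisj : Disjoint A B)
    (hA : InArcs A) (hB : InArcs B) (hne : (A ∪ B).Nonempty)
    (β : ℝ) (hβ : β = -1 ∨ β = 0 ∨ β = 1)
    (hfdi : IsFDI (primCoeff A B) β P) :
    (β = 0 → A = ∅ ∧ ∃ i j : Fin n, i ≠ j ∧ B = {(i, j)}) ∧
    (β = 1 → 2 ≤ A.card) := by
  classical
  obtain ⟨hbounds, h0P, h1P⟩ := FacetAux.P_struct hP
  have hadimP := FacetAux.adim_P_ge h0P h1P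
  obtain ⟨hvalid, hdim⟩ := hfdi
  set Td : Finset (Fin n × Fin n) := Finset.univ.image (fun i : Fin n => (i, i)) with hTd
  have hTd_mem : ∀ p : Fin n × Fin n, p ∈ Td ↔ p.1 = p.2 := by
    intro p
    simp only [hTd, Finset.mem_image, Finset.mem_univ, true_and]
    constructor
    · rintro ⟨i, rfl⟩; rfl
    · intro h
      refine ⟨p.1, ?_⟩
      obtain ⟨a, b⟩ := p
      simp only at h
      simp [h]
  have hTd_card : Td.card = n := by
    rw [hTd, Finset.card_image_of_injective _ (fun a b h => by
      simpa using congrArg Prod.fst h), Finset.card_univ, Fintype.card_fin]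
  have key : ∀ (p q : Fin n × Fin n) (w : Vec n), p.1 ≠ p.2 → q.1 ≠ q.2 → p ≠ q →
      (∀ x ∈ Face (primCoeff A B) β P,
        x p = w p ∧ x q = w q ∧ ∀ i : Fin n, x (i, i) = w (i, i)) → False := by
    intro p q w hp hq hpq hface
    have hdisjT : Disjoint Td ({p, q} : Finset (Fin n × Fin n)) := by
      rw [Finset.disjoint_left]
      intro r hr
      rw [hTd_mem] at hr
      simp only [Finset.mem_insert, Finset.mem_singleton]
      rintro (rfl | rfl)
      · exact hp hr
      · exact hq hr
    have hcard : (Td ∪ {p, q}).card = n + 2 := by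
      rw [Finset.card_union_of_disjoint hdisjT, hTd_card, Finset.card_pair hpq]
    have hle := FacetAux.adim_le (Face (primCoeff A B) β P) (Td ∪ {p, q}) w ?_
    · rw [hcard] at hle
      push_cast at hle hadimP
      omega
    · intro x hx r hr
      rw [Finset.mem_union] at hr
      obtain ⟨h1, h2, h3⟩ := hface x hx
      rcases hr with hr | hr
      · rw [hTd_mem] at hr
        obtain ⟨a, b⟩ := r
        simp only at hr
        subst hr
        exact h3 a
      · simp only [Finset.mem_insert, Finset.mem_singleton] at hr
        rcases hr with rfl | rfl
        · exact h1
        · exact h2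
  constructor
  · intro hb0
    have hA0 : A = ∅ := by
      rcases Finset.eq_empty_or_nonempty A with h | ⟨a, ha⟩
      · exact h
      · exfalso
        have hmem := h1P a (hA a ha)
        have hv := hvalid _ hmem
        rw [FacetAux.lhs_prim, FacetAux.sum_chi_singleton, FacetAux.sum_chi_singleton, if_pos ha,
          if_neg (Finset.disjoint_left.mp hdisj ha), hb0] at hv
        norm_num at hv
    have hBne : B.Nonempty := by
      obtain ⟨p, hp⟩ := hne
      rw [Finset.mem_union, hA0] at hp
      simp only [Finset.notMem_empty, false_or] at hp
      exact ⟨p, hp⟩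
    refine ⟨hA0, ?_⟩
    have hB1 : B.card = 1 := by
      by_contra hc
      have h2 : 1 < B.card := by
        have := Finset.card_pos.mpr hBne
        omega
      obtain ⟨p, hp, q, hq, hpq⟩ := Finset.one_lt_card.mp h2
      refine key p q 0 (hB p hp) (hB q hq) hpq ?_
      intro x hx
      obtain ⟨hxP, hxE⟩ := hx
      obtain ⟨hnn, _, hdiag⟩ := hbounds x hxP
      rw [FacetAux.lhs_prim, hA0, Finset.sum_empty, hb0] at hxE
      have hz : ∀ b ∈ B, x b = 0 := by
        have hs : ∑ b ∈ B, x b = 0 := by linarith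
        exact (Finset.sum_eq_zero_iff_of_nonneg (fun b _ => hnn b)).mp hs
      exact ⟨hz p hp, hz q hq, fun i => hdiag i⟩
    obtain ⟨b, hb⟩ := Finset.card_eq_one.mp hB1
    exact ⟨b.1, b.2, hB b (by simp [hb]), by rw [hb, Prod.mk.eta]⟩
  · intro hb1
    by_contra hlt
    push_neg at hlt
    have hcases : A.card = 0 ∨ A.card = 1 := by omega
    rcases hcases with h0 | h1
    · -- A empty : Face is empty
      have hA0 : A = ∅ := Finset.card_eq_zero.mp h0
      refine key (⟨0, by omega⟩, ⟨1, by omega⟩) (⟨1, by omega⟩, ⟨0, by omega⟩) 0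
        ?_ ?_ ?_ ?_
      · simp [Fin.ext_iff]
      · simp [Fin.ext_iff]
      · simp [Prod.ext_iff, Fin.ext_iff]
      · intro x hx
        exfalso
        obtain ⟨hxP, hxE⟩ := hx
        obtain ⟨hnn, _, _⟩ := hbounds x hxP
        rw [FacetAux.lhs_prim, hA0, Finset.sum_empty, hb1] at hxE
        have hs : (0 : ℝ) ≤ ∑ b ∈ B, x b := Finset.sum_nonneg (fun b _ => hnn b)
        linarith
    · obtain ⟨a, ha⟩ := Finset.card_eq_one.mp h1
      have haA : a ∈ A := by simp [ha]
      have haod : a.1 ≠ a.2 := hA a haA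
      -- every face point has x a = 1 and x b = 0 for b in B
      have hface_pt : ∀ x ∈ Face (primCoeff A B) β P, x a = 1 ∧ ∀ b ∈ B, x b = 0 := by
        intro x hx
        obtain ⟨hxP, hxE⟩ := hx
        obtain ⟨hnn, hpair, _⟩ := hbounds x hxP
        rw [FacetAux.lhs_prim, ha, Finset.sum_singleton, hb1] at hxE
        have hxa_le : x a ≤ 1 := by
          have h1 := hpair a.1 a.2
          have h2 := hnn (a.2, a.1)
          rw [Prod.mk.eta] at h1
          linarith
        have hsnn : (0 : ℝ) ≤ ∑ b ∈ B, x b := Finset.sum_nonneg (fun b _ => hnn b)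
        have hs0 : ∑ b ∈ B, x b = 0 := by linarith
        refine ⟨by linarith, (Finset.sum_eq_zero_iff_of_nonneg (fun b _ => hnn b)).mp hs0⟩
      have hchia : ∀ r : Fin n × Fin n, chi ({a} : Finset (Fin n × Fin n)) r
          = if r = a then 1 else 0 := by
        intro r
        simp [chi]
      rcases Finset.eq_empty_or_nonempty B with hB0 | ⟨b, hb⟩
      · -- use reverse arc
        refine key a (a.2, a.1) (chi {a}) haod (by simpa using haod.symm)
          (fun h => haod (by simpa using congrArg Prod.fst h |>.symm ▸ rfl)) ?_
        intro x hx
        obtain ⟨hx1, _⟩ := hface_pt x hx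
        obtain ⟨hxP, _⟩ := hx
        obtain ⟨hnn, hpair, hdiag⟩ := hbounds x hxP
        have hrev : x (a.2, a.1) = 0 := by
          have h1 := hpair a.1 a.2
          have h2 := hnn (a.2, a.1)
          rw [Prod.mk.eta] at h1
          linarith
        have hne' : (a.2, a.1) ≠ a := fun h => haod (by
          have := congrArg Prod.fst h
          simp at this
          exact this.symm ▸ rfl)
        refine ⟨?_, ?_, ?_⟩
        · rw [hx1, hchia, if_pos rfl]
        · rw [hrev, hchia, if_neg hne']
        · intro i
          rw [hdiag i, hchia, if_neg (fun h => haod (by rw [← h]))]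
      · have hba : b ≠ a := fun h => Finset.disjoint_left.mp hdisj haA (h ▸ hb)
        refine key a b (chi {a}) haod (hB b hb) (Ne.symm hba) ?_
        intro x hx
        obtain ⟨hx1, hxB⟩ := hface_pt x hx
        obtain ⟨hxP, _⟩ := hx
        obtain ⟨_, _, hdiag⟩ := hbounds x hxP
        refine ⟨?_, ?_, ?_⟩
        · rw [hx1, hchia, if_pos rfl]
        · rw [hxB b hb, hchia, if_neg hba]
        · intro i
          rw [hdiag i, hchia, if_neg (fun h => haod (by rw [← h]))]
end

section
/- Let A, B be disjoint subsets of Arcs(n) with A ≠ ∅. The inequality ∑_{a∈A} x_a − ∑_{b∈B} x_b ≤ 1 is valid for the partial order polytope PPO_n if and only if one of the following holds for some pairwise distinct elements i, j, k of {1,…,n}: (1) A = {(i,j)}; (2) A = {(i,j),(j,i)}; (3) A = {(i,j),(j,k)} and (i,k) ∈ B; (4) A = {(i,j),(j,k),(k,i)} and (j,i),(k,j),(i,k) ∈ B. -/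
open Finset

-- ==================== auxiliary lemmas ====================

lemma sum_ind_aux {n : ℕ} (S R : Finset (Fin n × Fin n)) :
    ∑ p : Fin n × Fin n, (if p ∈ S then (1:ℝ) else 0) * (if p ∈ R then 1 else 0)
      = ((R ∩ S).card : ℝ) := by
  simp only [ite_zero_mul, mul_ite, mul_one, mul_zero, ← ite_and, Finset.sum_boole]
  rw [Finset.filter_and]
  simp [Finset.filter_mem_eq_inter, Finset.inter_comm]

lemma lhs_chi_aux {n : ℕ} (A B R : Finset (Fin n × Fin n)) :
    lhs (primCoeff A B) (chi R) = ((R ∩ A).card : ℝ) - ((R ∩ B).card : ℝ) := by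
  unfold lhs primCoeff chi
  simp only [sub_mul, Finset.sum_sub_distrib, sum_ind_aux]

lemma lhs_linear_aux {n : ℕ} (α : Fin n × Fin n → ℝ) : IsLinearMap ℝ (lhs α) := by
  constructor
  · intro x y; unfold lhs; simp [mul_add, Finset.sum_add_distrib]
  · intro c x; unfold lhs
    simp [Finset.mul_sum, smul_eq_mul]; ring_nf
    exact Finset.sum_congr rfl (fun p _ => by ring)

lemma valid_iff_cards_aux {n : ℕ} (A B : Finset (Fin n × Fin n)) :
    Valid (primCoeff A B) 1 (PPO n) ↔
      ∀ R, IsPartialOrderRel R → (R ∩ A).card ≤ (R ∩ B).card + 1 := by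
  constructor
  · intro hv R hR
    have hx : chi R ∈ PPO n := subset_convexHull ℝ _ ⟨R, hR, rfl⟩
    have := hv _ hx
    rw [lhs_chi_aux] at this
    have h2 : ((R ∩ A).card : ℝ) ≤ ((R ∩ B).card : ℝ) + 1 := by linarith
    exact_mod_cast h2
  · intro h
    have hsub : {x : Vec n | ∃ R, IsPartialOrderRel R ∧ x = chi R} ⊆
        {x | lhs (primCoeff A B) x ≤ 1} := by
      rintro x ⟨R, hR, rfl⟩
      simp only [Set.mem_setOf_eq, lhs_chi_aux]
      have h2 : ((R ∩ A).card : ℝ) ≤ ((R ∩ B).card : ℝ) + 1 := by exact_mod_cast h R hR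
      linarith
    intro x hx
    exact convexHull_min hsub (convex_halfSpace_le (lhs_linear_aux _) 1) hx

lemma po_two_aux {n : ℕ} {i j k l : Fin n} (hij : i ≠ j) (hkl : k ≠ l)
    (hjk : j ≠ k) (hil : i ≠ l) :
    IsPartialOrderRel ({(i, j), (k, l)} : Finset (Fin n × Fin n)) := by
  constructor
  · intro a b hab hba
    simp only [Finset.mem_insert, Finset.mem_singleton, Prod.mk.injEq] at hab hba
    rcases hab with ⟨rfl, rfl⟩ | ⟨rfl, rfl⟩ <;>
      rcases hba with ⟨h1, h2⟩ | ⟨h1, h2⟩ <;> subst_vars <;> simp_all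
  · intro a b c hab hbc
    simp only [Finset.mem_insert, Finset.mem_singleton, Prod.mk.injEq] at hab hbc ⊢
    rcases hab with ⟨rfl, rfl⟩ | ⟨rfl, rfl⟩ <;>
      rcases hbc with ⟨h1, h2⟩ | ⟨h1, h2⟩ <;> subst_vars <;> simp_all

lemma po_tri_aux {n : ℕ} {i j k : Fin n} (hij : i ≠ j) (hjk : j ≠ k) (hik : i ≠ k) :
    IsPartialOrderRel ({(i, j), (j, k), (i, k)} : Finset (Fin n × Fin n)) := by
  constructor
  · intro a b hab hba
    simp only [Finset.mem_insert, Finset.mem_singleton, Prod.mk.injEq] at hab hba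
    rcases hab with ⟨rfl, rfl⟩ | ⟨rfl, rfl⟩ | ⟨rfl, rfl⟩ <;>
      rcases hba with ⟨h1, h2⟩ | ⟨h1, h2⟩ | ⟨h1, h2⟩ <;> subst_vars <;> simp_all
  · intro a b c hab hbc
    simp only [Finset.mem_insert, Finset.mem_singleton, Prod.mk.injEq] at hab hbc ⊢
    rcases hab with ⟨rfl, rfl⟩ | ⟨rfl, rfl⟩ | ⟨rfl, rfl⟩ <;>
      rcases hbc with ⟨h1, h2⟩ | ⟨h1, h2⟩ | ⟨h1, h2⟩ <;> subst_vars <;> simp_all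

lemma chain_closes_aux {n : ℕ} {A B : Finset (Fin n × Fin n)} (hdisj : Disjoint A B)
    (hval : ∀ R, IsPartialOrderRel R → (R ∩ A).card ≤ (R ∩ B).card + 1)
    {i j l : Fin n} (hij : i ≠ j) (hjl : j ≠ l) (hil : i ≠ l)
    (ha : (i, j) ∈ A) (hb : (j, l) ∈ A) : (i, l) ∈ B := by
  set R : Finset (Fin n × Fin n) := {(i, j), (j, l), (i, l)} with hR
  have hpo := po_tri_aux hij hjl hil
  have hcard := hval R hpo
  have hne : ((i, j) : Fin n × Fin n) ≠ (j, l) := by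
    simp only [Ne, Prod.mk.injEq, not_and]; intro h; exact absurd h hij
  have hsub : ({(i, j), (j, l)} : Finset (Fin n × Fin n)) ⊆ R ∩ A := by
    intro x hx
    simp only [Finset.mem_insert, Finset.mem_singleton] at hx
    rcases hx with rfl | rfl <;> simp [hR, Finset.mem_inter, ha, hb]
  have h2 : 2 ≤ (R ∩ A).card := by
    calc 2 = ({(i, j), (j, l)} : Finset (Fin n × Fin n)).card := (Finset.card_pair hne).symm
    _ ≤ (R ∩ A).card := Finset.card_le_card hsub
  have hBpos : 0 < (R ∩ B).card := by omega
  obtain ⟨x, hx⟩ := Finset.card_pos.mp hBpos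
  rw [Finset.mem_inter] at hx
  obtain ⟨hxR, hxB⟩ := hx
  have hxA : x ∉ A := fun h => (Finset.disjoint_left.mp hdisj h) hxB
  simp only [hR, Finset.mem_insert, Finset.mem_singleton] at hxR
  rcases hxR with rfl | rfl | rfl
  · exact absurd ha hxA
  · exact absurd hb hxA
  · exact hxB

lemma dich_aux {n : ℕ} {A B : Finset (Fin n × Fin n)} (hdisj : Disjoint A B)
    (hA : InArcs A)
    (hval : ∀ R, IsPartialOrderRel R → (R ∩ A).card ≤ (R ∩ B).card + 1)
    {i j k l : Fin n} (ha : (i, j) ∈ A) (hb : (k, l) ∈ A)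
    (hne : ((i, j) : Fin n × Fin n) ≠ (k, l)) :
    ((k, l) = ((j, i) : Fin n × Fin n)) ∨
    (j = k ∧ i ≠ l ∧ (i, l) ∈ B) ∨
    (l = i ∧ k ≠ j ∧ (k, j) ∈ B) := by
  have hij : i ≠ j := hA _ ha
  have hkl : k ≠ l := hA _ hb
  by_cases hrev : (k, l) = ((j, i) : Fin n × Fin n)
  · exact Or.inl hrev
  by_cases hjk : j = k
  · subst hjk
    have hil : i ≠ l := by intro h; subst h; exact hrev rfl
    exact Or.inr (Or.inl ⟨rfl, hil, chain_closes_aux hdisj hval hij hkl hil ha hb⟩)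
  by_cases hli : l = i
  · subst hli
    have hkj : k ≠ j := by intro h; subst h; exact hrev rfl
    exact Or.inr (Or.inr ⟨rfl, hkj, chain_closes_aux hdisj hval hkl hij hkj hb ha⟩)
  · exfalso
    have hpo := po_two_aux hij hkl hjk (fun h => hli (h.symm))
    have hcard := hval _ hpo
    have hRA : ({(i, j), (k, l)} : Finset (Fin n × Fin n)) ∩ A = {(i, j), (k, l)} := by
      apply Finset.inter_eq_left.mpr
      intro x hx
      simp only [Finset.mem_insert, Finset.mem_singleton] at hx
      rcases hx with rfl | rfl
      · exact ha
      · exact hb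
    have hRB : ({(i, j), (k, l)} : Finset (Fin n × Fin n)) ∩ B = ∅ := by
      apply Finset.eq_empty_of_forall_notMem
      intro x hx
      rw [Finset.mem_inter] at hx
      obtain ⟨hxR, hxB⟩ := hx
      simp only [Finset.mem_insert, Finset.mem_singleton] at hxR
      rcases hxR with rfl | rfl
      · exact (Finset.disjoint_left.mp hdisj ha) hxB
      · exact (Finset.disjoint_left.mp hdisj hb) hxB
    rw [hRA, hRB, Finset.card_pair hne, Finset.card_empty] at hcard
    omega

lemma classify_chain_aux {n : ℕ} {A B : Finset (Fin n × Fin n)} (hdisj : Disjoint A B)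
    (hA : InArcs A)
    (hval : ∀ R, IsPartialOrderRel R → (R ∩ A).card ≤ (R ∩ B).card + 1)
    {i j l : Fin n} (ha : (i, j) ∈ A) (hb : (j, l) ∈ A)
    (hij : i ≠ j) (hjl : j ≠ l) (hil : i ≠ l) :
    (A = {(i, j), (j, l)}) ∨
    (A = {(i, j), (j, l), (l, i)} ∧ (j, i) ∈ B ∧ (l, j) ∈ B) := by
  have claim : ∀ p q : Fin n, (p, q) ∈ A →
      ((p, q) : Fin n × Fin n) ≠ (i, j) → ((p, q) : Fin n × Fin n) ≠ (j, l) →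
      ((p, q) : Fin n × Fin n) = (l, i) ∧ (l, j) ∈ B ∧ (j, i) ∈ B := by
    intro p q hc hc1 hc2
    have hpq : p ≠ q := hA _ hc
    have d1 := dich_aux hdisj hA hval ha hc (fun h => hc1 h.symm)
    have d2 := dich_aux hdisj hA hval hb hc (fun h => hc2 h.symm)
    simp only [Prod.mk.injEq] at d1 d2
    rcases d1 with ⟨h1a, h1b⟩ | ⟨h1a, h1b, h1c⟩ | ⟨h1a, h1b, h1c⟩ <;>
      rcases d2 with ⟨h2a, h2b⟩ | ⟨h2a, h2b, h2c⟩ | ⟨h2a, h2b, h2c⟩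
    · exact absurd (h1a.symm.trans h2a) hjl
    · exact absurd ((h2a.trans h1a).symm) hjl
    · exact absurd (h1b.symm.trans h2a) hij
    · exact absurd (h1a.trans h2a) hjl
    · exact absurd (h1a.trans h2a.symm) hjl
    · exact absurd (h1a.symm.trans h2a.symm) hpq
    · exact absurd (h1a.symm.trans h2b) hij
    · refine ⟨?_, ?_, ?_⟩
      · rw [Prod.mk.injEq]; exact ⟨h2a.symm, h1a⟩
      · rw [h2a]; exact h1c
      · rw [← h1a]; exact h2c
    · exact absurd (h1a.symm.trans h2a) hij
  by_cases hall : ∀ c ∈ A, c = ((i, j) : Fin n × Fin n) ∨ c = ((j, l) : Fin n × Fin n)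
  · left
    apply Finset.Subset.antisymm
    · intro x hx
      simp only [Finset.mem_insert, Finset.mem_singleton]
      exact hall x hx
    · intro x hx
      simp only [Finset.mem_insert, Finset.mem_singleton] at hx
      rcases hx with rfl | rfl
      · exact ha
      · exact hb
  · right
    push_neg at hall
    obtain ⟨c, hcA, hc1, hc2⟩ := hall
    obtain ⟨hcEq, hB2, hB3⟩ := claim c.1 c.2 (by simpa using hcA) (by simpa using hc1)
      (by simpa using hc2)
    have hcA' : ((l, i) : Fin n × Fin n) ∈ A := by rw [← hcEq]; simpa using hcA
    refine ⟨Finset.Subset.antisymm ?_ ?_, hB3, hB2⟩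
    · intro x hx
      simp only [Finset.mem_insert, Finset.mem_singleton]
      by_cases e1 : x = ((i, j) : Fin n × Fin n)
      · exact Or.inl e1
      by_cases e2 : x = ((j, l) : Fin n × Fin n)
      · exact Or.inr (Or.inl e2)
      · exact Or.inr (Or.inr (by
          have := claim x.1 x.2 (by simpa using hx) (by simpa using e1) (by simpa using e2)
          simpa using this.1))
    · intro x hx
      simp only [Finset.mem_insert, Finset.mem_singleton] at hx
      rcases hx with rfl | rfl | rfl
      · exact ha
      · exact hb
      · exact hcA'

lemma card_le_two_aux {n : ℕ} (a b : Fin n × Fin n) :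
    ({a, b} : Finset (Fin n × Fin n)).card ≤ 2 :=
  (Finset.card_insert_le _ _).trans (by simp)

-- ==================== main theorem ====================

theorem valid_primary_ppo (n : ℕ) (hn : 2 ≤ n)
    (A B : Finset (Fin n × Fin n)) (hdisj : Disjoint A B)
    (hA : InArcs A) (hB : InArcs B) (hAne : A.Nonempty) :
    Valid (primCoeff A B) 1 (PPO n) ↔
      ((∃ i j : Fin n, i ≠ j ∧ A = {(i, j)}) ∨
       (∃ i j : Fin n, i ≠ j ∧ A = {(i, j), (j, i)}) ∨
       (∃ i j k : Fin n, i ≠ j ∧ j ≠ k ∧ i ≠ k ∧ A = {(i, j), (j, k)} ∧ (i, k) ∈ B) ∨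
       (∃ i j k : Fin n, i ≠ j ∧ j ≠ k ∧ i ≠ k ∧ A = {(i, j), (j, k), (k, i)} ∧
          (j, i) ∈ B ∧ (k, j) ∈ B ∧ (i, k) ∈ B)) := by
  rw [valid_iff_cards_aux]
  constructor
  · -- forward: validity implies one of the four forms
    intro hval
    obtain ⟨⟨i, j⟩, haA⟩ := hAne
    have hij : i ≠ j := hA _ haA
    by_cases h1 : ∀ c ∈ A, c = ((i, j) : Fin n × Fin n)
    · exact Or.inl ⟨i, j, hij, Finset.eq_singleton_iff_unique_mem.mpr ⟨haA, h1⟩⟩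
    push_neg at h1
    obtain ⟨⟨k, l⟩, hbA, hbne⟩ := h1
    have hkl : k ≠ l := hA _ hbA
    rcases dich_aux hdisj hA hval haA hbA (fun h => hbne h.symm) with
      hrev | ⟨hjk, hil, hB1⟩ | ⟨hli, hkj, hB2⟩
    · -- b = (j, i) : form 2
      rw [hrev] at hbA
      refine Or.inr (Or.inl ⟨i, j, hij, Finset.Subset.antisymm ?_ ?_⟩)
      · intro x hx
        simp only [Finset.mem_insert, Finset.mem_singleton]
        by_cases e1 : x = ((i, j) : Fin n × Fin n)
        · exact Or.inl e1
        by_cases e2 : x = ((j, i) : Fin n × Fin n)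
        · exact Or.inr e2
        exfalso
        obtain ⟨p, q⟩ := x
        have hpq : p ≠ q := hA _ hx
        have d1 := dich_aux hdisj hA hval haA hx (fun h => e1 h.symm)
        have d2 := dich_aux hdisj hA hval hbA hx (fun h => e2 h.symm)
        simp only [Prod.mk.injEq] at d1 d2
        rcases d1 with ⟨h1a, h1b⟩ | ⟨h1a, h1b, h1c⟩ | ⟨h1a, h1b, h1c⟩
        · exact e2 (by rw [Prod.mk.injEq]; exact ⟨h1a, h1b⟩)
        · rcases d2 with ⟨h2a, h2b⟩ | ⟨h2a, h2b, h2c⟩ | ⟨h2a, h2b, h2c⟩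
          · exact e1 (by rw [Prod.mk.injEq]; exact ⟨h2a, h2b⟩)
          · exact hij (h2a.trans h1a.symm)
          · exact hpq (h1a.symm.trans h2a.symm)
        · rcases d2 with ⟨h2a, h2b⟩ | ⟨h2a, h2b, h2c⟩ | ⟨h2a, h2b, h2c⟩
          · exact e1 (by rw [Prod.mk.injEq]; exact ⟨h2a, h2b⟩)
          · exact hpq (h2a.symm.trans h1a.symm)
          · exact hij (h1a.symm.trans h2a)
      · intro x hx
        simp only [Finset.mem_insert, Finset.mem_singleton] at hx
        rcases hx with rfl | rfl
        · exact haA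
        · exact hbA
    · -- chain (i,j),(j,l) with (i,l) ∈ B
      rw [← hjk] at hbA hkl
      rcases classify_chain_aux hdisj hA hval haA hbA hij hkl hil with hEq | ⟨hEq, hB3, hB4⟩
      · exact Or.inr (Or.inr (Or.inl ⟨i, j, l, hij, hkl, hil, hEq, hB1⟩))
      · exact Or.inr (Or.inr (Or.inr ⟨i, j, l, hij, hkl, hil, hEq, hB3, hB4, hB1⟩))
    · -- reversed chain (k,i),(i,j) with (k,j) ∈ B
      rw [hli] at hbA hkl
      rcases classify_chain_aux hdisj hA hval hbA haA hkl hij hkj with hEq | ⟨hEq, hB3, hB4⟩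
      · exact Or.inr (Or.inr (Or.inl ⟨k, i, j, hkl, hij, hkj, hEq, hB2⟩))
      · exact Or.inr (Or.inr (Or.inr ⟨k, i, j, hkl, hij, hkj, hEq, hB3, hB4, hB2⟩))
  · -- backward: each form is valid
    rintro (⟨i, j, hij, rfl⟩ | ⟨i, j, hij, rfl⟩ |
            ⟨i, j, k, hij, hjk, hik, rfl, hBik⟩ |
            ⟨i, j, k, hij, hjk, hik, rfl, hBji, hBkj, hBik⟩) <;> intro R hR
    · -- form 1
      have : (R ∩ {(i, j)}).card ≤ 1 :=
        (Finset.card_le_card (Finset.inter_subset_right)).trans (by simp)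
      omega
    · -- form 2
      by_cases hm : ((i, j) : Fin n × Fin n) ∈ R
      · have hsub : R ∩ {(i, j), (j, i)} ⊆ ({(i, j)} : Finset (Fin n × Fin n)) := by
          intro x hx
          rw [Finset.mem_inter] at hx
          obtain ⟨hxR, hxA⟩ := hx
          simp only [Finset.mem_insert, Finset.mem_singleton] at hxA ⊢
          rcases hxA with rfl | rfl
          · rfl
          · exact absurd hxR (hR.1 _ _ hm)
        have := (Finset.card_le_card hsub).trans (le_of_eq (Finset.card_singleton _))
        omega
      · have hsub : R ∩ {(i, j), (j, i)} ⊆ ({(j, i)} : Finset (Fin n × Fin n)) := by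
          intro x hx
          rw [Finset.mem_inter] at hx
          obtain ⟨hxR, hxA⟩ := hx
          simp only [Finset.mem_insert, Finset.mem_singleton] at hxA ⊢
          rcases hxA with rfl | rfl
          · exact absurd hxR hm
          · rfl
        have := (Finset.card_le_card hsub).trans (le_of_eq (Finset.card_singleton _))
        omega
    · -- form 3
      by_cases hm1 : ((i, j) : Fin n × Fin n) ∈ R <;>
        by_cases hm2 : ((j, k) : Fin n × Fin n) ∈ R
      · have hik' : ((i, k) : Fin n × Fin n) ∈ R := hR.2 _ _ _ hm1 hm2
        have hc1 : (R ∩ {(i, j), (j, k)}).card ≤ 2 :=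
          (Finset.card_le_card Finset.inter_subset_right).trans (card_le_two_aux _ _)
        have hc2 : 1 ≤ (R ∩ B).card :=
          Finset.one_le_card.mpr ⟨(i, k), Finset.mem_inter.mpr ⟨hik', hBik⟩⟩
        omega
      · have hsub : R ∩ {(i, j), (j, k)} ⊆ ({(i, j)} : Finset (Fin n × Fin n)) := by
          intro x hx
          rw [Finset.mem_inter] at hx
          obtain ⟨hxR, hxA⟩ := hx
          simp only [Finset.mem_insert, Finset.mem_singleton] at hxA ⊢
          rcases hxA with rfl | rfl
          · rfl
          · exact absurd hxR hm2
        have := (Finset.card_le_card hsub).trans (le_of_eq (Finset.card_singleton _))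
        omega
      · have hsub : R ∩ {(i, j), (j, k)} ⊆ ({(j, k)} : Finset (Fin n × Fin n)) := by
          intro x hx
          rw [Finset.mem_inter] at hx
          obtain ⟨hxR, hxA⟩ := hx
          simp only [Finset.mem_insert, Finset.mem_singleton] at hxA ⊢
          rcases hxA with rfl | rfl
          · exact absurd hxR hm1
          · rfl
        have := (Finset.card_le_card hsub).trans (le_of_eq (Finset.card_singleton _))
        omega
      · have hsub : R ∩ {(i, j), (j, k)} ⊆ ({(i, j)} : Finset (Fin n × Fin n)) := by
          intro x hx
          rw [Finset.mem_inter] at hx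
          obtain ⟨hxR, hxA⟩ := hx
          simp only [Finset.mem_insert, Finset.mem_singleton] at hxA ⊢
          rcases hxA with rfl | rfl
          · rfl
          · exact absurd hxR hm2
        have := (Finset.card_le_card hsub).trans (le_of_eq (Finset.card_singleton _))
        omega
    · -- form 4
      by_cases hm1 : ((i, j) : Fin n × Fin n) ∈ R <;>
        by_cases hm2 : ((j, k) : Fin n × Fin n) ∈ R <;>
        by_cases hm3 : ((k, i) : Fin n × Fin n) ∈ R
      · exact absurd hm3 (hR.1 _ _ (hR.2 _ _ _ hm1 hm2))
      · have hik' : ((i, k) : Fin n × Fin n) ∈ R := hR.2 _ _ _ hm1 hm2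
        have hc2 : 1 ≤ (R ∩ B).card :=
          Finset.one_le_card.mpr ⟨(i, k), Finset.mem_inter.mpr ⟨hik', hBik⟩⟩
        have hsub : R ∩ {(i, j), (j, k), (k, i)} ⊆
            ({(i, j), (j, k)} : Finset (Fin n × Fin n)) := by
          intro x hx
          rw [Finset.mem_inter] at hx
          obtain ⟨hxR, hxA⟩ := hx
          simp only [Finset.mem_insert, Finset.mem_singleton] at hxA ⊢
          rcases hxA with rfl | rfl | rfl
          · exact Or.inl rfl
          · exact Or.inr rfl
          · exact absurd hxR hm3
        have := (Finset.card_le_card hsub).trans (card_le_two_aux _ _)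
        omega
      · have hkj' : ((k, j) : Fin n × Fin n) ∈ R := hR.2 _ _ _ hm3 hm1
        have hc2 : 1 ≤ (R ∩ B).card :=
          Finset.one_le_card.mpr ⟨(k, j), Finset.mem_inter.mpr ⟨hkj', hBkj⟩⟩
        have hsub : R ∩ {(i, j), (j, k), (k, i)} ⊆
            ({(i, j), (k, i)} : Finset (Fin n × Fin n)) := by
          intro x hx
          rw [Finset.mem_inter] at hx
          obtain ⟨hxR, hxA⟩ := hx
          simp only [Finset.mem_insert, Finset.mem_singleton] at hxA ⊢
          rcases hxA with rfl | rfl | rfl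
          · exact Or.inl rfl
          · exact absurd hxR hm2
          · exact Or.inr rfl
        have := (Finset.card_le_card hsub).trans (card_le_two_aux _ _)
        omega
      · have hsub : R ∩ {(i, j), (j, k), (k, i)} ⊆ ({(i, j)} : Finset (Fin n × Fin n)) := by
          intro x hx
          rw [Finset.mem_inter] at hx
          obtain ⟨hxR, hxA⟩ := hx
          simp only [Finset.mem_insert, Finset.mem_singleton] at hxA ⊢
          rcases hxA with rfl | rfl | rfl
          · rfl
          · exact absurd hxR hm2
          · exact absurd hxR hm3
        have := (Finset.card_le_card hsub).trans (le_of_eq (Finset.card_singleton _))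
        omega
      · have hji' : ((j, i) : Fin n × Fin n) ∈ R := hR.2 _ _ _ hm2 hm3
        have hc2 : 1 ≤ (R ∩ B).card :=
          Finset.one_le_card.mpr ⟨(j, i), Finset.mem_inter.mpr ⟨hji', hBji⟩⟩
        have hsub : R ∩ {(i, j), (j, k), (k, i)} ⊆
            ({(j, k), (k, i)} : Finset (Fin n × Fin n)) := by
          intro x hx
          rw [Finset.mem_inter] at hx
          obtain ⟨hxR, hxA⟩ := hx
          simp only [Finset.mem_insert, Finset.mem_singleton] at hxA ⊢
          rcases hxA with rfl | rfl | rfl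
          · exact absurd hxR hm1
          · exact Or.inl rfl
          · exact Or.inr rfl
        have := (Finset.card_le_card hsub).trans (card_le_two_aux _ _)
        omega
      · have hsub : R ∩ {(i, j), (j, k), (k, i)} ⊆ ({(j, k)} : Finset (Fin n × Fin n)) := by
          intro x hx
          rw [Finset.mem_inter] at hx
          obtain ⟨hxR, hxA⟩ := hx
          simp only [Finset.mem_insert, Finset.mem_singleton] at hxA ⊢
          rcases hxA with rfl | rfl | rfl
          · exact absurd hxR hm1
          · rfl
          · exact absurd hxR hm3
        have := (Finset.card_le_card hsub).trans (le_of_eq (Finset.card_singleton _))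
        omega
      · have hsub : R ∩ {(i, j), (j, k), (k, i)} ⊆ ({(k, i)} : Finset (Fin n × Fin n)) := by
          intro x hx
          rw [Finset.mem_inter] at hx
          obtain ⟨hxR, hxA⟩ := hx
          simp only [Finset.mem_insert, Finset.mem_singleton] at hxA ⊢
          rcases hxA with rfl | rfl | rfl
          · exact absurd hxR hm1
          · exact absurd hxR hm2
          · rfl
        have := (Finset.card_le_card hsub).trans (le_of_eq (Finset.card_singleton _))
        omega
      · have hsub : R ∩ {(i, j), (j, k), (k, i)} ⊆ (∅ : Finset (Fin n × Fin n)) := by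
          intro x hx
          rw [Finset.mem_inter] at hx
          obtain ⟨hxR, hxA⟩ := hx
          simp only [Finset.mem_insert, Finset.mem_singleton] at hxA
          rcases hxA with rfl | rfl | rfl
          · exact absurd hxR hm1
          · exact absurd hxR hm2
          · exact absurd hxR hm3
        have := (Finset.card_le_card hsub).trans (le_of_eq Finset.card_empty)
        omega
end

section
/- Let m ≥ 2 and n ≥ 2m, and let a_1,…,a_m,b_1,…,b_m be 2m pairwise distinct elements of {1,…,n}. Then the m-fence inequality ∑_{i=1}^{m} x_{a_i b_i} − ∑_{i≠j} x_{a_i b_j} ≤ 1 defines a facet of the interval order polytope PIO_n and also defines a facet of the semiorder polytope PSO_n. -/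
open Finset

namespace FenceAux

open Finset

variable {n : ℕ}

noncomputable def e (p : Fin n × Fin n) : Vec n := Pi.single p 1

lemma e_apply (p q : Fin n × Fin n) : e p q = if q = p then 1 else 0 := by
  simp [e, Pi.single_apply]

noncomputable def mkR (f : Fin n → ℝ) : Finset (Fin n × Fin n) :=
  univ.filter (fun p => f p.1 + 1 < f p.2)

lemma mem_mkR (f : Fin n → ℝ) (p : Fin n × Fin n) : p ∈ mkR f ↔ f p.1 + 1 < f p.2 := by
  simp [mkR]

lemma semiorder_mkR (f : Fin n → ℝ) : IsSemiorderRel (mkR f) :=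
  ⟨f, fun i j => by simp [mkR]⟩

lemma io_of_semiorder {R : Finset (Fin n × Fin n)} (h : IsSemiorderRel R) :
    IsIntervalOrderRel R := by
  obtain ⟨f, hf⟩ := h
  exact ⟨f, fun i => f i + 1, fun i => by dsimp; linarith, fun i j => hf i j⟩

lemma irrefl_semiorder {R : Finset (Fin n × Fin n)} (h : IsSemiorderRel R) (i : Fin n) :
    (i, i) ∉ R := by
  obtain ⟨f, hf⟩ := h
  rw [hf i i]; intro h'; linarith

lemma irrefl_io {R : Finset (Fin n × Fin n)} (h : IsIntervalOrderRel R) (i : Fin n) :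
    (i, i) ∉ R := by
  obtain ⟨f, g, hfg, hf⟩ := h
  have := hfg i
  rw [hf i i]; intro h'; linarith

lemma chi_diff {R₁ R₀ : Finset (Fin n × Fin n)} {p : Fin n × Fin n}
    (hp : p ∈ R₁) (hp0 : p ∉ R₀) (h : ∀ q, q ≠ p → (q ∈ R₁ ↔ q ∈ R₀)) :
    chi R₁ - chi R₀ = e p := by
  funext q
  by_cases hq : q = p
  · subst hq; simp [chi, e_apply, hp, hp0]
  · have := h q hq
    simp only [Pi.sub_apply, chi, e_apply, if_neg hq]
    by_cases h1 : q ∈ R₁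
    · simp [h1, this.mp h1]
    · simp [h1, fun h2 => h1 (this.mpr h2)]
      exact fun h2 => h1 (this.mpr h2)

lemma chi_single {R : Finset (Fin n × Fin n)} {c : Fin n × Fin n}
    (h : ∀ q, q ∈ R ↔ q = c) : chi R = e c := by
  funext q
  simp only [chi, e_apply, h q]

lemma chi_split3 {R S T : Finset (Fin n × Fin n)} {c : Fin n × Fin n}
    (h : ∀ q, q ∈ R ↔ (q ∈ S ∨ q ∈ T ∨ q = c))
    (hST : ∀ q, ¬(q ∈ S ∧ q ∈ T)) (hSc : c ∉ S) (hTc : c ∉ T) :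
    chi R = chi S + chi T + e c := by
  funext q
  simp only [Pi.add_apply, chi, e_apply, h q]
  by_cases h1 : q ∈ S
  · have h2 : q ∉ T := fun h2 => hST q ⟨h1, h2⟩
    have h3 : q ≠ c := fun h3 => hSc (h3 ▸ h1)
    simp [h1, h2, h3]
  · by_cases h2 : q ∈ T
    · have h3 : q ≠ c := fun h3 => hTc (h3 ▸ h2)
      simp [h1, h2, h3]
    · by_cases h3 : q = c <;> simp [h1, h2, h3, hSc, hTc]

end FenceAux
namespace FenceAux

open Finset

section Fence

variable {n m : ℕ} {a b : Fin m → Fin n}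

def Afin (a b : Fin m → Fin n) : Finset (Fin n × Fin n) :=
  Finset.image (fun i : Fin m => (a i, b i)) Finset.univ

def Bfin (a b : Fin m → Fin n) : Finset (Fin n × Fin n) :=
  Finset.image (fun q : Fin m × Fin m => (a q.1, b q.2))
    (Finset.univ.filter (fun q : Fin m × Fin m => q.1 ≠ q.2))

def Qf (m : ℕ) : Finset (Fin m × Fin m) := Finset.univ.filter (fun q => q.1 ≠ q.2)

variable (ha : Function.Injective a) (hb : Function.Injective b)
  (hab : ∀ i j : Fin m, a i ≠ b j)

include ha hb in
lemma lhs_formula (x : Vec n) :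
    lhs (primCoeff (Afin a b) (Bfin a b)) x
      = (∑ i : Fin m, x (a i, b i)) - ∑ q ∈ Qf m, x (a q.1, b q.2) := by
  have h1 : ∀ (S : Finset (Fin n × Fin n)),
      ∑ p : Fin n × Fin n, (if p ∈ S then (1:ℝ) else 0) * x p = ∑ p ∈ S, x p := by
    intro S
    rw [Finset.sum_congr rfl (g := fun p => if p ∈ S then x p else 0)
      (fun p _ => by by_cases h : p ∈ S <;> simp [h]), Finset.sum_ite_mem,
      Finset.univ_inter]
  have e1 : ∑ p ∈ Afin a b, x p = ∑ i : Fin m, x (a i, b i) := by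
    rw [Afin, Finset.sum_image]
    intro i _ j _ hij
    exact ha (by exact (Prod.mk.injEq _ _ _ _ ▸ hij).1)
  have e2 : ∑ p ∈ Bfin a b, x p = ∑ q ∈ Qf m, x (a q.1, b q.2) := by
    rw [Bfin, Qf, Finset.sum_image]
    intro q _ r _ hqr
    have h1' := ha (Prod.mk.injEq _ _ _ _ ▸ hqr).1
    have h2' := hb (Prod.mk.injEq _ _ _ _ ▸ hqr).2
    exact Prod.ext h1' h2'
  calc lhs (primCoeff (Afin a b) (Bfin a b)) x
      = ∑ p : Fin n × Fin n, ((if p ∈ Afin a b then (1:ℝ) else 0) * x p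
          - (if p ∈ Bfin a b then (1:ℝ) else 0) * x p) := by
        apply Finset.sum_congr rfl; intro p _; rw [primCoeff]; ring
    _ = _ := by rw [Finset.sum_sub_distrib, h1, h1, e1, e2]

include ha hb in
lemma lhs_chi_mkR (f : Fin n → ℝ) :
    lhs (primCoeff (Afin a b) (Bfin a b)) (chi (mkR f))
      = (∑ i : Fin m, if f (a i) + 1 < f (b i) then (1:ℝ) else 0)
        - ∑ q ∈ Qf m, if f (a q.1) + 1 < f (b q.2) then (1:ℝ) else 0 := by
  rw [lhs_formula ha hb]
  congr 1
  · exact Finset.sum_congr rfl fun i _ => by simp [chi, mem_mkR]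
  · exact Finset.sum_congr rfl fun q _ => by simp [chi, mem_mkR]

-- sum helpers
lemma fence_sum_one {P : Fin n × Fin n → Prop} [DecidablePred P] {k : Fin m}
    (h : ∀ i, P (a i, b i) ↔ i = k) :
    (∑ i : Fin m, if P (a i, b i) then (1:ℝ) else 0) = 1 := by
  rw [Finset.sum_congr rfl (fun i _ => by rw [if_congr (h i) rfl rfl]),
    Finset.sum_ite_eq' Finset.univ k (fun _ => (1:ℝ))]
  simp

lemma fence_sum_two {P : Fin n × Fin n → Prop} [DecidablePred P] {k l : Fin m}
    (hkl : k ≠ l) (h : ∀ i, P (a i, b i) ↔ (i = k ∨ i = l)) :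
    (∑ i : Fin m, if P (a i, b i) then (1:ℝ) else 0) = 2 := by
  have : ∀ i : Fin m, (if P (a i, b i) then (1:ℝ) else 0)
      = (if i = k then (1:ℝ) else 0) + (if i = l then (1:ℝ) else 0) := by
    intro i
    by_cases h1 : i = k
    · subst h1; simp [h, hkl]
    · by_cases h2 : i = l
      · subst h2; simp [(h _).2 (Or.inr rfl), h1]
      · have : ¬ P (a i, b i) := fun hP => by rcases (h i).1 hP with h'|h'; exact h1 h'; exact h2 h'
        simp [h1, h2, this]
  rw [Finset.sum_congr rfl (fun i _ => this i), Finset.sum_add_distrib,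
    Finset.sum_ite_eq' Finset.univ k (fun _ => (1:ℝ)),
    Finset.sum_ite_eq' Finset.univ l (fun _ => (1:ℝ))]
  norm_num

lemma cross_sum_zero {P : Fin n × Fin n → Prop} [DecidablePred P]
    (h : ∀ q : Fin m × Fin m, q.1 ≠ q.2 → ¬ P (a q.1, b q.2)) :
    (∑ q ∈ Qf m, if P (a q.1, b q.2) then (1:ℝ) else 0) = 0 := by
  apply Finset.sum_eq_zero
  intro q hq
  rw [Qf, Finset.mem_filter] at hq
  simp [h q hq.2]

lemma cross_sum_one {P : Fin n × Fin n → Prop} [DecidablePred P] {k l : Fin m}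
    (hkl : k ≠ l) (h : ∀ q : Fin m × Fin m, q.1 ≠ q.2 → (P (a q.1, b q.2) ↔ q = (k, l))) :
    (∑ q ∈ Qf m, if P (a q.1, b q.2) then (1:ℝ) else 0) = 1 := by
  rw [Finset.sum_eq_single (k, l)]
  · simp [(h (k,l) hkl).2 rfl]
  · intro q hq hne
    rw [Qf, Finset.mem_filter] at hq
    have : ¬ P (a q.1, b q.2) := fun hP => hne ((h q hq.2).1 hP)
    simp [this]
  · intro hkl'
    exact absurd (by rw [Qf, Finset.mem_filter]; exact ⟨Finset.mem_univ _, hkl⟩) hkl'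

end Fence
end FenceAux
namespace FenceAux
open Finset
section Fence
variable {n m : ℕ} {a b : Fin m → Fin n}
variable (ha : Function.Injective a) (hb : Function.Injective b)
  (hab : ∀ i j : Fin m, a i ≠ b j)

noncomputable def alphaF (a b : Fin m → Fin n) : Fin n × Fin n → ℝ :=
  primCoeff (Afin a b) (Bfin a b)

/-- S1: single fence arc k -/
noncomputable def g1 (a b : Fin m → Fin n) (k : Fin m) : Fin n → ℝ :=
  fun x => if x = a k then 0 else if x = b k then 1.3 else 0.7

include hab in
lemma g1_cond (k : Fin m) (x y : Fin n) :
    g1 a b k x + 1 < g1 a b k y ↔ (x = a k ∧ y = b k) := by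
  have h := hab k k
  simp only [g1]
  split_ifs <;> norm_num <;> simp_all

include ha hb hab in
lemma g1_val (k : Fin m) :
    lhs (alphaF a b) (chi (mkR (g1 a b k))) = 1 := by
  have h1 : (∑ i : Fin m, if g1 a b k (a i) + 1 < g1 a b k (b i) then (1:ℝ) else 0) = 1 := by
    refine fence_sum_one (P := fun p => g1 a b k p.1 + 1 < g1 a b k p.2) (k := k) (fun i => ?_)
    dsimp only
    rw [g1_cond hab]
    constructor
    · rintro ⟨h1, -⟩; exact ha h1
    · rintro rfl; exact ⟨rfl, rfl⟩
  have h2 : (∑ q ∈ Qf m, if g1 a b k (a q.1) + 1 < g1 a b k (b q.2) then (1:ℝ) else 0) = 0 := by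
    refine cross_sum_zero (P := fun p => g1 a b k p.1 + 1 < g1 a b k p.2) (fun q hq hP => ?_)
    dsimp only at hP
    rw [g1_cond hab] at hP
    exact hq ((ha hP.1).trans (hb hP.2).symm)
  rw [alphaF, lhs_chi_mkR ha hb, h1, h2]
  norm_num

include hab in
lemma g1_chi (k : Fin m) : chi (mkR (g1 a b k)) = e (a k, b k) := by
  apply chi_single
  rintro ⟨x, y⟩
  rw [mem_mkR]
  dsimp only
  rw [g1_cond hab, Prod.mk.injEq]

/-- S2: two fences i j plus cross (a i, b j), i ≠ j -/
noncomputable def g2 (a b : Fin m → Fin n) (i j : Fin m) : Fin n → ℝ :=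
  fun x => if x = a i then 0 else if x = a j then 0.5 else if x = b i then 1.2
    else if x = b j then 1.6 else 0.7

include ha hb hab in
lemma g2_cond {i j : Fin m} (hij : i ≠ j) (x y : Fin n) :
    g2 a b i j x + 1 < g2 a b i j y ↔
      ((x = a i ∧ y = b i) ∨ (x = a i ∧ y = b j) ∨ (x = a j ∧ y = b j)) := by
  have h1 := hab i i
  have h2 := hab i j
  have h3 := hab j i
  have h4 := hab j j
  have h5 : a i ≠ a j := fun h => hij (ha h)
  have h6 : b i ≠ b j := fun h => hij (hb h)
  simp only [g2]
  split_ifs <;> norm_num <;> simp_all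

include ha hb hab in
lemma g2_val {i j : Fin m} (hij : i ≠ j) :
    lhs (alphaF a b) (chi (mkR (g2 a b i j))) = 1 := by
  have h1 : (∑ i' : Fin m, if g2 a b i j (a i') + 1 < g2 a b i j (b i') then (1:ℝ) else 0) = 2 := by
    refine fence_sum_two hij (P := fun p => g2 a b i j p.1 + 1 < g2 a b i j p.2) (fun i' => ?_)
    dsimp only
    rw [g2_cond ha hb hab hij]
    constructor
    · rintro (⟨h1, -⟩ | ⟨h1, h2⟩ | ⟨h1, -⟩)
      · exact Or.inl (ha h1)
      · exact Or.inl (ha h1)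
      · exact Or.inr (ha h1)
    · rintro (rfl | rfl)
      · exact Or.inl ⟨rfl, rfl⟩
      · exact Or.inr (Or.inr ⟨rfl, rfl⟩)
  have h2 : (∑ q ∈ Qf m, if g2 a b i j (a q.1) + 1 < g2 a b i j (b q.2) then (1:ℝ) else 0) = 1 := by
    refine cross_sum_one hij (P := fun p => g2 a b i j p.1 + 1 < g2 a b i j p.2) (fun q hq => ?_)
    dsimp only
    rw [g2_cond ha hb hab hij]
    constructor
    · rintro (⟨h1, h2⟩ | ⟨h1, h2⟩ | ⟨h1, h2⟩)
      · exact absurd ((ha h1).trans (hb h2).symm) hq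
      · exact Prod.ext (ha h1) (hb h2)
      · exact absurd ((ha h1).trans (hb h2).symm) hq
    · rintro rfl
      exact Or.inr (Or.inl ⟨rfl, rfl⟩)
  rw [alphaF, lhs_chi_mkR ha hb, h1, h2]
  norm_num

include ha hb hab in
lemma g2_chi {i j : Fin m} (hij : i ≠ j) :
    chi (mkR (g2 a b i j)) = chi (mkR (g1 a b i)) + chi (mkR (g1 a b j)) + e (a i, b j) := by
  have h6 : b i ≠ b j := fun h => hij (hb h)
  have h5 : a i ≠ a j := fun h => hij (ha h)
  apply chi_split3
  · rintro ⟨x, y⟩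
    rw [mem_mkR, mem_mkR, mem_mkR]
    dsimp only
    rw [g2_cond ha hb hab hij, g1_cond hab, g1_cond hab, Prod.mk.injEq]
    tauto
  · rintro ⟨x, y⟩ ⟨hS, hT⟩
    rw [mem_mkR, g1_cond hab] at hS hT
    exact h5 (hS.1.symm.trans hT.1)
  · rw [mem_mkR]
    dsimp only
    rw [g1_cond hab]
    rintro ⟨-, h⟩; exact h6 h.symm
  · rw [mem_mkR]
    dsimp only
    rw [g1_cond hab]
    rintro ⟨h, -⟩; exact h5 h
end Fence
end FenceAux
namespace FenceAux
open Finset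
section Fence
variable {n m : ℕ} {a b : Fin m → Fin n}
variable (ha : Function.Injective a) (hb : Function.Injective b)
  (hab : ∀ i j : Fin m, a i ≠ b j)

/-- S3: fence i plus (a i, v), v not in range b -/
noncomputable def g3 (a b : Fin m → Fin n) (i : Fin m) (v : Fin n) : Fin n → ℝ :=
  fun x => if x = a i then 0 else if x = b i then 1.5 else if x = v then 1.2 else 0.7

include hab in
lemma g3_cond (i : Fin m) {v : Fin n} (hv1 : v ≠ a i) (hv2 : v ≠ b i) (x y : Fin n) :
    g3 a b i v x + 1 < g3 a b i v y ↔ (x = a i ∧ (y = b i ∨ y = v)) := by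
  have h := hab i i
  have hv1' : a i ≠ v := fun h => hv1 h.symm
  have hv2' : b i ≠ v := fun h => hv2 h.symm
  simp only [g3]
  split_ifs <;> norm_num <;> simp_all

include ha hb hab in
lemma g3_val (i : Fin m) {v : Fin n} (hv1 : v ≠ a i) (hv : ∀ j, b j ≠ v) :
    lhs (alphaF a b) (chi (mkR (g3 a b i v))) = 1 := by
  have h1 : (∑ i' : Fin m, if g3 a b i v (a i') + 1 < g3 a b i v (b i') then (1:ℝ) else 0) = 1 := by
    refine fence_sum_one (P := fun p => g3 a b i v p.1 + 1 < g3 a b i v p.2) (k := i) (fun i' => ?_)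
    dsimp only
    rw [g3_cond hab i hv1 (hv i).symm]
    constructor
    · rintro ⟨h1, h2 | h2⟩
      · exact ha h1
      · exact absurd h2 (hv i')
    · rintro rfl; exact ⟨rfl, Or.inl rfl⟩
  have h2 : (∑ q ∈ Qf m, if g3 a b i v (a q.1) + 1 < g3 a b i v (b q.2) then (1:ℝ) else 0) = 0 := by
    refine cross_sum_zero (P := fun p => g3 a b i v p.1 + 1 < g3 a b i v p.2) (fun q hq hP => ?_)
    dsimp only at hP
    rw [g3_cond hab i hv1 (hv i).symm] at hP
    rcases hP with ⟨h1, h2 | h2⟩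
    · exact hq ((ha h1).trans (hb h2).symm)
    · exact hv q.2 h2
  rw [alphaF, lhs_chi_mkR ha hb, h1, h2]
  norm_num

include hab in
lemma g3_diff (i : Fin m) {v : Fin n} (hv1 : v ≠ a i) (hv2 : v ≠ b i) :
    chi (mkR (g3 a b i v)) - chi (mkR (g1 a b i)) = e (a i, v) := by
  apply chi_diff
  · rw [mem_mkR]; dsimp only
    rw [g3_cond hab i hv1 hv2]; exact ⟨rfl, Or.inr rfl⟩
  · rw [mem_mkR]; dsimp only
    rw [g1_cond hab]; rintro ⟨-, h⟩; exact hv2 h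
  · rintro ⟨x, y⟩ hq
    rw [mem_mkR, mem_mkR]; dsimp only
    rw [g3_cond hab i hv1 hv2, g1_cond hab]
    constructor
    · rintro ⟨rfl, h2 | rfl⟩
      · exact ⟨rfl, h2⟩
      · exact absurd rfl hq
    · rintro ⟨rfl, rfl⟩; exact ⟨rfl, Or.inl rfl⟩

/-- S4: fence j plus (u, b j), u not in range a -/
noncomputable def g4 (a b : Fin m → Fin n) (j : Fin m) (u : Fin n) : Fin n → ℝ :=
  fun x => if x = a j then 0 else if x = u then 0.1 else if x = b j then 1.3 else 0.7

include hab in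
lemma g4_cond (j : Fin m) {u : Fin n} (hu1 : u ≠ a j) (hu2 : u ≠ b j) (x y : Fin n) :
    g4 a b j u x + 1 < g4 a b j u y ↔ ((x = a j ∨ x = u) ∧ y = b j) := by
  have h := hab j j
  simp only [g4]
  split_ifs <;> norm_num <;> simp_all

include ha hb hab in
lemma g4_val (j : Fin m) {u : Fin n} (hu2 : u ≠ b j) (hu : ∀ i, a i ≠ u) :
    lhs (alphaF a b) (chi (mkR (g4 a b j u))) = 1 := by
  have h1 : (∑ i' : Fin m, if g4 a b j u (a i') + 1 < g4 a b j u (b i') then (1:ℝ) else 0) = 1 := by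
    refine fence_sum_one (P := fun p => g4 a b j u p.1 + 1 < g4 a b j u p.2) (k := j) (fun i' => ?_)
    dsimp only
    rw [g4_cond hab j (hu j).symm hu2]
    constructor
    · rintro ⟨h1 | h1, h2⟩
      · exact hb h2
      · exact absurd h1 (hu i')
    · rintro rfl; exact ⟨Or.inl rfl, rfl⟩
  have h2 : (∑ q ∈ Qf m, if g4 a b j u (a q.1) + 1 < g4 a b j u (b q.2) then (1:ℝ) else 0) = 0 := by
    refine cross_sum_zero (P := fun p => g4 a b j u p.1 + 1 < g4 a b j u p.2) (fun q hq hP => ?_)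
    dsimp only at hP
    rw [g4_cond hab j (hu j).symm hu2] at hP
    rcases hP with ⟨h1 | h1, h2⟩
    · exact hq ((ha h1).trans (hb h2).symm)
    · exact hu q.1 h1
  rw [alphaF, lhs_chi_mkR ha hb, h1, h2]
  norm_num

include hab in
lemma g4_diff (j : Fin m) {u : Fin n} (hu1 : u ≠ a j) (hu2 : u ≠ b j) :
    chi (mkR (g4 a b j u)) - chi (mkR (g1 a b j)) = e (u, b j) := by
  apply chi_diff
  · rw [mem_mkR]; dsimp only
    rw [g4_cond hab j hu1 hu2]; exact ⟨Or.inr rfl, rfl⟩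
  · rw [mem_mkR]; dsimp only
    rw [g1_cond hab]; rintro ⟨h, -⟩; exact hu1 h
  · rintro ⟨x, y⟩ hq
    rw [mem_mkR, mem_mkR]; dsimp only
    rw [g4_cond hab j hu1 hu2, g1_cond hab]
    constructor
    · rintro ⟨rfl | rfl, rfl⟩
      · exact ⟨rfl, rfl⟩
      · exact absurd rfl hq
    · rintro ⟨rfl, rfl⟩; exact ⟨Or.inl rfl, rfl⟩

/-- S5: fence k plus (u, v) and (u, b k); u ∉ range a, v ∉ range b, b k ≠ u, a k ≠ v -/
noncomputable def g5 (a b : Fin m → Fin n) (k : Fin m) (u v : Fin n) : Fin n → ℝ :=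
  fun x => if x = u then 0 else if x = a k then 0.3 else if x = v then 1.2
    else if x = b k then 1.4 else 0.7

noncomputable def g5' (a b : Fin m → Fin n) (k : Fin m) (u : Fin n) : Fin n → ℝ :=
  fun x => if x = u then 0 else if x = a k then 0.3 else if x = b k then 1.4 else 0.7

include hab in
lemma g5_cond (k : Fin m) {u v : Fin n} (huv : u ≠ v) (hu1 : a k ≠ u) (hu2 : b k ≠ u)
    (hv1 : a k ≠ v) (hv2 : b k ≠ v) (x y : Fin n) :
    g5 a b k u v x + 1 < g5 a b k u v y ↔
      ((x = u ∧ (y = v ∨ y = b k)) ∨ (x = a k ∧ y = b k)) := by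
  have h := hab k k
  have hu1' : u ≠ a k := fun h => hu1 h.symm
  have hu2' : u ≠ b k := fun h => hu2 h.symm
  have hv1' : v ≠ a k := fun h => hv1 h.symm
  have hv2' : v ≠ b k := fun h => hv2 h.symm
  simp only [g5]
  split_ifs <;> norm_num <;> simp_all

include hab in
lemma g5'_cond (k : Fin m) {u : Fin n} (hu1 : a k ≠ u) (hu2 : b k ≠ u) (x y : Fin n) :
    g5' a b k u x + 1 < g5' a b k u y ↔ ((x = u ∨ x = a k) ∧ y = b k) := by
  have h := hab k k
  have hu1' : u ≠ a k := fun h => hu1 h.symm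
  have hu2' : u ≠ b k := fun h => hu2 h.symm
  simp only [g5']
  split_ifs <;> norm_num <;> simp_all

include ha hb hab in
lemma g5_val (k : Fin m) {u v : Fin n} (huv : u ≠ v) (hu : ∀ i, a i ≠ u) (hv : ∀ j, b j ≠ v)
    (hu2 : b k ≠ u) (hv1 : a k ≠ v) :
    lhs (alphaF a b) (chi (mkR (g5 a b k u v))) = 1 := by
  have hcond := g5_cond hab k huv (hu k) hu2 hv1 (hv k)
  have h1 : (∑ i' : Fin m, if g5 a b k u v (a i') + 1 < g5 a b k u v (b i') then (1:ℝ) else 0) = 1 := by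
    refine fence_sum_one (P := fun p => g5 a b k u v p.1 + 1 < g5 a b k u v p.2) (k := k) (fun i' => ?_)
    dsimp only
    rw [hcond]
    constructor
    · rintro (⟨h1, -⟩ | ⟨h1, -⟩)
      · exact absurd h1 (hu i')
      · exact ha h1
    · rintro rfl; exact Or.inr ⟨rfl, rfl⟩
  have h2 : (∑ q ∈ Qf m, if g5 a b k u v (a q.1) + 1 < g5 a b k u v (b q.2) then (1:ℝ) else 0) = 0 := by
    refine cross_sum_zero (P := fun p => g5 a b k u v p.1 + 1 < g5 a b k u v p.2) (fun q hq hP => ?_)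
    dsimp only at hP
    rw [hcond] at hP
    rcases hP with ⟨h1, -⟩ | ⟨h1, h2⟩
    · exact hu q.1 h1
    · exact hq ((ha h1).trans (hb h2).symm)
  rw [alphaF, lhs_chi_mkR ha hb, h1, h2]
  norm_num

include ha hb hab in
lemma g5'_val (k : Fin m) {u : Fin n} (hu : ∀ i, a i ≠ u) (hu2 : b k ≠ u) :
    lhs (alphaF a b) (chi (mkR (g5' a b k u))) = 1 := by
  have hcond := g5'_cond hab k (hu k) hu2
  have h1 : (∑ i' : Fin m, if g5' a b k u (a i') + 1 < g5' a b k u (b i') then (1:ℝ) else 0) = 1 := by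
    refine fence_sum_one (P := fun p => g5' a b k u p.1 + 1 < g5' a b k u p.2) (k := k) (fun i' => ?_)
    dsimp only
    rw [hcond]
    constructor
    · rintro ⟨h1 | h1, h2⟩
      · exact absurd h1 (hu i')
      · exact hb h2
    · rintro rfl; exact ⟨Or.inr rfl, rfl⟩
  have h2 : (∑ q ∈ Qf m, if g5' a b k u (a q.1) + 1 < g5' a b k u (b q.2) then (1:ℝ) else 0) = 0 := by
    refine cross_sum_zero (P := fun p => g5' a b k u p.1 + 1 < g5' a b k u p.2) (fun q hq hP => ?_)
    dsimp only at hP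
    rw [hcond] at hP
    rcases hP with ⟨h1 | h1, h2⟩
    · exact hu q.1 h1
    · exact hq ((ha h1).trans (hb h2).symm)
  rw [alphaF, lhs_chi_mkR ha hb, h1, h2]
  norm_num

include hab in
lemma g5_diff (k : Fin m) {u v : Fin n} (huv : u ≠ v) (hu1 : a k ≠ u) (hu2 : b k ≠ u)
    (hv1 : a k ≠ v) (hv2 : b k ≠ v) :
    chi (mkR (g5 a b k u v)) - chi (mkR (g5' a b k u)) = e (u, v) := by
  apply chi_diff
  · rw [mem_mkR]; dsimp only
    rw [g5_cond hab k huv hu1 hu2 hv1 hv2]; exact Or.inl ⟨rfl, Or.inl rfl⟩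
  · rw [mem_mkR]; dsimp only
    rw [g5'_cond hab k hu1 hu2]; rintro ⟨-, h⟩; exact hv2 h.symm
  · rintro ⟨x, y⟩ hq
    rw [mem_mkR, mem_mkR]; dsimp only
    rw [g5_cond hab k huv hu1 hu2 hv1 hv2, g5'_cond hab k hu1 hu2]
    constructor
    · rintro (⟨rfl, rfl | rfl⟩ | ⟨rfl, rfl⟩)
      · exact absurd rfl hq
      · exact ⟨Or.inl rfl, rfl⟩
      · exact ⟨Or.inr rfl, rfl⟩
    · rintro ⟨rfl | rfl, rfl⟩
      · exact Or.inl ⟨rfl, Or.inr rfl⟩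
      · exact Or.inr ⟨rfl, rfl⟩

/-- S6: for p = (b i, a j), i ≠ j -/
noncomputable def g6 (a b : Fin m → Fin n) (i j : Fin m) : Fin n → ℝ :=
  fun x => if x = b i then 0 else if x = a j then 1.1 else if x = b j then 2.2 else 1.2

noncomputable def g6' (a b : Fin m → Fin n) (i j : Fin m) : Fin n → ℝ :=
  fun x => if x = b i then 0 else if x = a j then 0.9 else if x = b j then 2.2 else 1.2

include hb hab in
lemma g6_cond {i j : Fin m} (hij : i ≠ j) (x y : Fin n) :
    g6 a b i j x + 1 < g6 a b i j y ↔
      ((x = b i ∧ y ≠ b i) ∨ (x = a j ∧ y = b j)) := by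
  have h1 := hab j i
  have h2 := hab j j
  have h3 : b i ≠ b j := fun h => hij (hb h)
  have h1' : b i ≠ a j := fun h => h1 h.symm
  have h2' : b j ≠ a j := fun h => h2 h.symm
  have h3' : b j ≠ b i := fun h => h3 h.symm
  simp only [g6]
  split_ifs <;> norm_num <;> simp_all

include hb hab in
lemma g6'_cond {i j : Fin m} (hij : i ≠ j) (x y : Fin n) :
    g6' a b i j x + 1 < g6' a b i j y ↔
      ((x = b i ∧ y ≠ b i ∧ y ≠ a j) ∨ (x = a j ∧ y = b j)) := by
  have h1 := hab j i
  have h2 := hab j j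
  have h3 : b i ≠ b j := fun h => hij (hb h)
  have h1' : b i ≠ a j := fun h => h1 h.symm
  have h2' : b j ≠ a j := fun h => h2 h.symm
  have h3' : b j ≠ b i := fun h => h3 h.symm
  simp only [g6']
  split_ifs <;> norm_num <;> simp_all

include ha hb hab in
lemma g6_val {i j : Fin m} (hij : i ≠ j) :
    lhs (alphaF a b) (chi (mkR (g6 a b i j))) = 1 := by
  have hcond := g6_cond hb hab hij
  have h1 : (∑ i' : Fin m, if g6 a b i j (a i') + 1 < g6 a b i j (b i') then (1:ℝ) else 0) = 1 := by
    refine fence_sum_one (P := fun p => g6 a b i j p.1 + 1 < g6 a b i j p.2) (k := j) (fun i' => ?_)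
    dsimp only
    rw [hcond]
    constructor
    · rintro (⟨h1, -⟩ | ⟨h1, -⟩)
      · exact absurd h1 (hab i' i)
      · exact ha h1
    · rintro rfl; exact Or.inr ⟨rfl, rfl⟩
  have h2 : (∑ q ∈ Qf m, if g6 a b i j (a q.1) + 1 < g6 a b i j (b q.2) then (1:ℝ) else 0) = 0 := by
    refine cross_sum_zero (P := fun p => g6 a b i j p.1 + 1 < g6 a b i j p.2) (fun q hq hP => ?_)
    dsimp only at hP
    rw [hcond] at hP
    rcases hP with ⟨h1, -⟩ | ⟨h1, h2⟩
    · exact hab q.1 i h1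
    · exact hq ((ha h1).trans (hb h2).symm)
  rw [alphaF, lhs_chi_mkR ha hb, h1, h2]
  norm_num

include ha hb hab in
lemma g6'_val {i j : Fin m} (hij : i ≠ j) :
    lhs (alphaF a b) (chi (mkR (g6' a b i j))) = 1 := by
  have hcond := g6'_cond hb hab hij
  have h1 : (∑ i' : Fin m, if g6' a b i j (a i') + 1 < g6' a b i j (b i') then (1:ℝ) else 0) = 1 := by
    refine fence_sum_one (P := fun p => g6' a b i j p.1 + 1 < g6' a b i j p.2) (k := j) (fun i' => ?_)
    dsimp only
    rw [hcond]
    constructor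
    · rintro (⟨h1, -⟩ | ⟨h1, -⟩)
      · exact absurd h1 (hab i' i)
      · exact ha h1
    · rintro rfl; exact Or.inr ⟨rfl, rfl⟩
  have h2 : (∑ q ∈ Qf m, if g6' a b i j (a q.1) + 1 < g6' a b i j (b q.2) then (1:ℝ) else 0) = 0 := by
    refine cross_sum_zero (P := fun p => g6' a b i j p.1 + 1 < g6' a b i j p.2) (fun q hq hP => ?_)
    dsimp only at hP
    rw [hcond] at hP
    rcases hP with ⟨h1, -⟩ | ⟨h1, h2⟩
    · exact hab q.1 i h1
    · exact hq ((ha h1).trans (hb h2).symm)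
  rw [alphaF, lhs_chi_mkR ha hb, h1, h2]
  norm_num

include hb hab in
lemma g6_diff {i j : Fin m} (hij : i ≠ j) :
    chi (mkR (g6 a b i j)) - chi (mkR (g6' a b i j)) = e (b i, a j) := by
  have h1 := hab j i
  apply chi_diff
  · rw [mem_mkR]; dsimp only
    rw [g6_cond hb hab hij]; exact Or.inl ⟨rfl, fun h => h1 (by rw [h])⟩
  · rw [mem_mkR]; dsimp only
    rw [g6'_cond hb hab hij]
    rintro (⟨-, -, h⟩ | ⟨h, -⟩)
    · exact h rfl
    · exact h1 (by rw [h])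
  · rintro ⟨x, y⟩ hq
    rw [mem_mkR, mem_mkR]; dsimp only
    rw [g6_cond hb hab hij, g6'_cond hb hab hij]
    constructor
    · rintro (⟨rfl, h2⟩ | h')
      · refine Or.inl ⟨rfl, h2, fun h => hq ?_⟩
        rw [h]
      · exact Or.inr h'
    · rintro (⟨rfl, h2, -⟩ | h')
      · exact Or.inl ⟨rfl, h2⟩
      · exact Or.inr h'
end Fence
end FenceAux
namespace FenceAux
open Finset Module

variable {n : ℕ}

def Dset (n : ℕ) : Finset (Fin n × Fin n) := (univ : Finset (Fin n)).offDiag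

lemma mem_Dset (p : Fin n × Fin n) : p ∈ Dset n ↔ p.1 ≠ p.2 := by
  simp [Dset, Finset.mem_offDiag]

lemma card_Dset : (Dset n).card = n * n - n := by
  simp [Dset, Finset.offDiag_card]

def Wd (n : ℕ) : Submodule ℝ (Vec n) where
  carrier := {v | ∀ i, v (i, i) = 0}
  add_mem' := fun hx hy i => by simp [Pi.add_apply, hx i, hy i]
  zero_mem' := fun i => rfl
  smul_mem' := fun c x hx i => by simp [Pi.smul_apply, hx i]

lemma mem_Wd (v : Vec n) : v ∈ Wd n ↔ ∀ i, v (i, i) = 0 := Iff.rfl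

lemma e_mem_Wd {p : Fin n × Fin n} (hp : p.1 ≠ p.2) : e p ∈ Wd n := by
  intro i
  rw [e_apply, if_neg]
  rintro rfl
  exact hp rfl

lemma sum_singles (v : Vec n) : ∑ p : Fin n × Fin n, v p • e p = v := by
  funext q
  rw [Finset.sum_apply]
  have : ∀ p : Fin n × Fin n, (v p • e p) q = if q = p then v p else 0 := by
    intro p
    by_cases h : q = p <;> simp [e_apply, h]
  rw [Finset.sum_congr rfl fun p _ => this p, Finset.sum_ite_eq Finset.univ q v]
  simp

lemma decomp_Wd {v : Vec n} (hv : v ∈ Wd n) : v = ∑ p ∈ Dset n, v p • e p := by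
  conv_lhs => rw [← sum_singles v]
  symm
  apply Finset.sum_subset (Finset.subset_univ _)
  intro p _ hp
  rw [mem_Dset, not_not] at hp
  have : v p = 0 := by
    have := hv p.1
    rwa [show (p.1, p.1) = p from Prod.ext rfl hp] at this
  rw [this, zero_smul]

lemma Wd_eq_span : Wd n = Submodule.span ℝ (e '' ((Dset n : Finset _) : Set (Fin n × Fin n))) := by
  apply le_antisymm
  · intro v hv
    rw [decomp_Wd hv]
    exact Submodule.sum_mem _ fun p hp =>
      Submodule.smul_mem _ _ (Submodule.subset_span ⟨p, by simpa using hp, rfl⟩)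
  · rw [Submodule.span_le]
    rintro _ ⟨p, hp, rfl⟩
    exact e_mem_Wd ((mem_Dset p).mp (by simpa using hp))

lemma finrank_Wd : finrank ℝ (Wd n) = n * n - n := by
  have hli : LinearIndependent ℝ (fun p : Fin n × Fin n => (e p : Vec n)) := by
    have : (fun p : Fin n × Fin n => (e p : Vec n)) = ⇑(Pi.basisFun ℝ (Fin n × Fin n)) := by
      funext p
      rw [Pi.basisFun_apply, e]
    rw [this]
    exact (Pi.basisFun ℝ (Fin n × Fin n)).linearIndependent
  have hli2 : LinearIndependent ℝ
      (fun p : {q : Fin n × Fin n // q ∈ Dset n} => (e p.val : Vec n)) :=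
    hli.comp Subtype.val Subtype.val_injective
  have hr : Set.range (fun p : {q : Fin n × Fin n // q ∈ Dset n} => (e p.val : Vec n))
      = e '' ((Dset n : Finset _) : Set (Fin n × Fin n)) := by
    rw [show (fun p : {q : Fin n × Fin n // q ∈ Dset n} => (e p.val : Vec n))
      = e ∘ Subtype.val from rfl, Set.range_comp, Subtype.range_val]
  have := finrank_span_eq_card hli2
  rw [hr] at this
  rw [Wd_eq_span, this, Fintype.card_coe, card_Dset]

/-- linear map given by lhs -/
noncomputable def LF (α : Fin n × Fin n → ℝ) : Vec n →ₗ[ℝ] ℝ where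
  toFun := lhs α
  map_add' x y := by
    simp only [lhs, Pi.add_apply, mul_add, Finset.sum_add_distrib]
  map_smul' c x := by
    simp only [lhs, Pi.smul_apply, RingHom.id_apply, smul_eq_mul, Finset.mul_sum]
    exact Finset.sum_congr rfl fun p _ => by ring

lemma finrank_inf_ker {α : Fin n × Fin n → ℝ} {w : Vec n}
    (hw : w ∈ Wd n) (hw' : lhs α w ≠ 0) :
    finrank ℝ ((Wd n) ⊓ LinearMap.ker (LF α) : Submodule ℝ (Vec n)) = finrank ℝ (Wd n) - 1 := by
  set φ : (Wd n) →ₗ[ℝ] ℝ := (LF α).comp (Wd n).subtype with hφ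
  have hker : LinearMap.ker φ = Submodule.comap (Wd n).subtype ((Wd n) ⊓ LinearMap.ker (LF α)) := by
    ext x
    simp [φ, Submodule.mem_comap, LinearMap.mem_ker, x.2]
  have heq : finrank ℝ ((Wd n) ⊓ LinearMap.ker (LF α) : Submodule ℝ (Vec n))
      = finrank ℝ (LinearMap.ker φ) := by
    rw [hker]
    exact (Submodule.comapSubtypeEquivOfLe inf_le_left).finrank_eq.symm
  have hrange : finrank ℝ (LinearMap.range φ) = 1 := by
    apply le_antisymm
    · have := Submodule.finrank_le (LinearMap.range φ)
      rwa [finrank_self] at this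
    · rw [Nat.succ_le_iff, finrank_pos_iff_exists_ne_zero]
      refine ⟨⟨φ ⟨w, hw⟩, LinearMap.mem_range_self _ _⟩, ?_⟩
      simp only [ne_eq, Submodule.mk_eq_zero]
      exact hw'
  have := φ.finrank_range_add_finrank_ker
  rw [hrange] at this
  omega

end FenceAux
namespace FenceAux
open Finset Module

section Poly
variable {n : ℕ}

noncomputable def gs (u v : Fin n) : Fin n → ℝ :=
  fun x => if x = u then 0 else if x = v then 1.3 else 0.7

lemma gs_cond {u v : Fin n} (huv : u ≠ v) (x y : Fin n) :
    gs u v x + 1 < gs u v y ↔ (x = u ∧ y = v) := by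
  simp only [gs]
  split_ifs <;> norm_num <;> simp_all

lemma gs_chi {u v : Fin n} (huv : u ≠ v) : chi (mkR (gs u v)) = e (u, v) := by
  apply chi_single
  rintro ⟨x, y⟩
  rw [mem_mkR]
  dsimp only
  rw [gs_cond huv, Prod.mk.injEq]

lemma chi_mkR_zero : chi (mkR (fun _ : Fin n => (0:ℝ))) = 0 := by
  funext p
  simp only [chi, mem_mkR]
  norm_num

lemma affdir_poly {G : Set (Vec n)} (hmk : ∀ f : Fin n → ℝ, chi (mkR f) ∈ G)
    (hdiag : ∀ x ∈ G, ∀ i, x (i, i) = 0) :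
    (affineSpan ℝ (convexHull ℝ G)).direction = Wd n := by
  rw [affineSpan_convexHull]
  apply le_antisymm
  · have h1 : affineSpan ℝ G ≤ AffineSubspace.mk' 0 (Wd n) := by
      rw [affineSpan_le]
      intro x hx
      have : x -ᵥ 0 ∈ Wd n := by
        rw [vsub_eq_sub, sub_zero]
        exact fun i => hdiag x hx i
      exact AffineSubspace.mem_mk'.mpr this
    have h2 := AffineSubspace.direction_le h1
    rwa [AffineSubspace.direction_mk'] at h2
  · rw [Wd_eq_span, Submodule.span_le]
    rintro _ ⟨p, hp, rfl⟩
    have hp' : p.1 ≠ p.2 := (mem_Dset p).mp (by simpa using hp)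
    have h1 := subset_affineSpan ℝ G (hmk (gs p.1 p.2))
    have h2 := subset_affineSpan ℝ G (hmk (fun _ => 0))
    have h3 := AffineSubspace.vsub_mem_direction h1 h2
    rwa [vsub_eq_sub, chi_mkR_zero, sub_zero, gs_chi hp', Prod.mk.eta] at h3

lemma adim_poly {G : Set (Vec n)} (hmk : ∀ f : Fin n → ℝ, chi (mkR f) ∈ G)
    (hdiag : ∀ x ∈ G, ∀ i, x (i, i) = 0) :
    adim (convexHull ℝ G) = ((n * n - n : ℕ) : ℤ) := by
  have hne : convexHull ℝ G ≠ ∅ :=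
    Set.nonempty_iff_ne_empty.mp ⟨_, subset_convexHull ℝ G (hmk (fun _ => 0))⟩
  rw [adim, if_neg hne, affdir_poly hmk hdiag, finrank_Wd]

lemma diag_zero_of_hull {G : Set (Vec n)} (hdiag : ∀ x ∈ G, ∀ i, x (i, i) = 0)
    {x : Vec n} (hx : x ∈ convexHull ℝ G) (i : Fin n) : x (i, i) = 0 := by
  have h : convexHull ℝ G ⊆ (Wd n : Set (Vec n)) :=
    convexHull_min (fun y hy => fun j => hdiag y hy j) (Wd n).convex
  exact h hx i

end Poly

section Val
variable {n m : ℕ} {a b : Fin m → Fin n}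
variable (ha : Function.Injective a) (hb : Function.Injective b)
  (hab : ∀ i j : Fin m, a i ≠ b j)

lemma lhs_e (α : Fin n × Fin n → ℝ) (p : Fin n × Fin n) : lhs α (e p) = α p := by
  rw [lhs, Finset.sum_eq_single p]
  · simp [e_apply]
  · intro q _ hq
    simp [e_apply, hq, Ne.symm hq]
  · simp

include ha hb in
lemma gen_bound (R : Finset (Fin n × Fin n)) (hR : IsIntervalOrderRel R) :
    lhs (alphaF a b) (chi R) ≤ 1 := by
  obtain ⟨f, g, hfg, hmem⟩ := hR
  rw [alphaF, lhs_formula ha hb]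
  set S := univ.filter (fun i : Fin m => (a i, b i) ∈ R) with hS
  have hfence : (∑ i : Fin m, chi R (a i, b i)) = (S.card : ℝ) := by
    rw [hS]
    exact Finset.sum_boole _ _
  have hcross_nonneg : ∀ q ∈ Qf m, (0:ℝ) ≤ chi R (a q.1, b q.2) := by
    intro q _
    unfold chi
    positivity
  rcases eq_or_ne S ∅ with hSe | hSne
  · have h0 : (0:ℝ) ≤ ∑ q ∈ Qf m, chi R (a q.1, b q.2) := Finset.sum_nonneg hcross_nonneg
    rw [hfence, hSe]
    simp
    linarith
  · obtain ⟨i₀, hi₀, hmin⟩ := Finset.exists_min_image S (fun i => g (a i))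
      (Finset.nonempty_iff_ne_empty.mpr hSne)
    set T : Finset (Fin m × Fin m) := (S.erase i₀).image (fun j => (i₀, j)) with hT
    have hTQ : T ⊆ Qf m := by
      intro q hq
      rw [hT, Finset.mem_image] at hq
      obtain ⟨j, hj, rfl⟩ := hq
      rw [Qf, Finset.mem_filter]
      exact ⟨Finset.mem_univ _, fun h => (Finset.mem_erase.mp hj).1 h.symm⟩
    have hTsum : (∑ q ∈ T, chi R (a q.1, b q.2)) = ((S.card - 1 : ℕ) : ℝ) := by
      rw [hT, Finset.sum_image (by intro x _ y _ h; exact (Prod.mk.injEq _ _ _ _ ▸ h).2)]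
      have : ∀ j ∈ S.erase i₀, chi R (a i₀, b j) = 1 := by
        intro j hj
        have hjS := Finset.mem_of_mem_erase hj
        rw [hS, Finset.mem_filter] at hjS
        have h1 : g (a j) < f (b j) := (hmem _ _).mp hjS.2
        have h2 : g (a i₀) ≤ g (a j) := hmin j (Finset.mem_of_mem_erase hj)
        have : (a i₀, b j) ∈ R := (hmem _ _).mpr (lt_of_le_of_lt h2 h1)
        simp [chi, this]
      rw [Finset.sum_congr rfl this, Finset.sum_const, Finset.card_erase_of_mem hi₀]
      simp
    have hle : (∑ q ∈ T, chi R (a q.1, b q.2)) ≤ ∑ q ∈ Qf m, chi R (a q.1, b q.2) :=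
      Finset.sum_le_sum_of_subset_of_nonneg hTQ (fun q hq _ => hcross_nonneg q hq)
    have hcard : 1 ≤ S.card := Finset.card_pos.mpr (Finset.nonempty_iff_ne_empty.mpr hSne)
    rw [hfence]
    rw [hTsum] at hle
    have : ((S.card - 1 : ℕ) : ℝ) = (S.card : ℝ) - 1 := by
      push_cast [hcard]
      ring
    rw [this] at hle
    linarith

include ha hb in
lemma valid_PIO : Valid (alphaF a b) 1 (PIO n) := by
  intro x hx
  have hconv : Convex ℝ {w : Vec n | lhs (alphaF a b) w ≤ 1} :=
    convex_halfSpace_le ⟨(LF (alphaF a b)).map_add, (LF (alphaF a b)).map_smul⟩ 1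
  have hsub : PIO n ⊆ {w : Vec n | lhs (alphaF a b) w ≤ 1} := by
    rw [PIO]
    refine convexHull_min ?_ hconv
    rintro _ ⟨R, hR, rfl⟩
    exact gen_bound ha hb R hR
  exact hsub hx

lemma PSO_subset_PIO : PSO n ⊆ PIO n := by
  rw [PSO, PIO]
  apply convexHull_mono
  rintro _ ⟨R, hR, rfl⟩
  exact ⟨R, io_of_semiorder hR, rfl⟩

include ha hb in
lemma valid_PSO : Valid (alphaF a b) 1 (PSO n) :=
  fun x hx => valid_PIO ha hb x (PSO_subset_PIO hx)

end Val
end FenceAux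
namespace FenceAux
open Finset Module

section FaceSec
variable {n m : ℕ} {a b : Fin m → Fin n}
variable (ha : Function.Injective a) (hb : Function.Injective b)
  (hab : ∀ i j : Fin m, a i ≠ b j)

lemma mem_Afin {u v : Fin n} : (u, v) ∈ Afin a b ↔ ∃ i, a i = u ∧ b i = v := by
  simp [Afin, Prod.ext_iff]

lemma mem_Bfin {u v : Fin n} :
    (u, v) ∈ Bfin a b ↔ ∃ q : Fin m × Fin m, q.1 ≠ q.2 ∧ a q.1 = u ∧ b q.2 = v := by
  simp only [Bfin, Finset.mem_image, Finset.mem_filter, Finset.mem_univ, true_and,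
    Prod.mk.injEq]

include ha hb in
lemma alphaF_fence (i : Fin m) : alphaF a b (a i, b i) = 1 := by
  rw [alphaF, primCoeff, if_pos, if_neg]
  · norm_num
  · rw [mem_Bfin]
    rintro ⟨q, hq, h1, h2⟩
    exact hq ((ha h1).trans (hb h2).symm)
  · rw [mem_Afin]; exact ⟨i, rfl, rfl⟩

include ha hb in
lemma alphaF_cross {i j : Fin m} (hij : i ≠ j) : alphaF a b (a i, b j) = -1 := by
  rw [alphaF, primCoeff, if_neg, if_pos]
  · norm_num
  · rw [mem_Bfin]; exact ⟨(i, j), hij, rfl, rfl⟩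
  · rw [mem_Afin]
    rintro ⟨k, h1, h2⟩
    exact hij ((ha h1).symm.trans (hb h2).symm.symm)

lemma alphaF_zero {u v : Fin n} (h : ∀ i j, ¬(a i = u ∧ b j = v)) : alphaF a b (u, v) = 0 := by
  rw [alphaF, primCoeff, if_neg, if_neg]
  · norm_num
  · rw [mem_Bfin]; rintro ⟨q, -, h1, h2⟩; exact h q.1 q.2 ⟨h1, h2⟩
  · rw [mem_Afin]; rintro ⟨i, h1, h2⟩; exact h i i ⟨h1, h2⟩

include hab in
lemma alphaF_diag (i : Fin n) : alphaF a b (i, i) = 0 :=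
  alphaF_zero (fun k l ⟨h1, h2⟩ => hab k l (h1.trans h2.symm))

lemma exists_ne_fin (hm : 2 ≤ m) (i : Fin m) : ∃ k : Fin m, k ≠ i := by
  have : 1 < Fintype.card (Fin m) := by rw [Fintype.card_fin]; omega
  exact Fintype.exists_ne_of_one_lt_card this i

variable {P : Set (Vec n)} {G : Set (Vec n)}

include ha hb hab in
lemma diff_mem_dir (hP : P = convexHull ℝ G) (hG : ∀ f : Fin n → ℝ, chi (mkR f) ∈ G)
    (f f' : Fin n → ℝ) (h1 : lhs (alphaF a b) (chi (mkR f)) = 1)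
    (h2 : lhs (alphaF a b) (chi (mkR f')) = 1) :
    chi (mkR f) - chi (mkR f') ∈ (affineSpan ℝ (Face (alphaF a b) 1 P)).direction := by
  have hx : chi (mkR f) ∈ Face (alphaF a b) 1 P := ⟨hP ▸ subset_convexHull ℝ G (hG f), h1⟩
  have hy : chi (mkR f') ∈ Face (alphaF a b) 1 P := ⟨hP ▸ subset_convexHull ℝ G (hG f'), h2⟩
  rw [← vsub_eq_sub]
  exact AffineSubspace.vsub_mem_direction (subset_affineSpan ℝ _ hx) (subset_affineSpan ℝ _ hy)

include ha hb hab in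
lemma up_case5 (hP : P = convexHull ℝ G) (hG : ∀ f : Fin n → ℝ, chi (mkR f) ∈ G)
    {u v : Fin n} (k : Fin m) (huv : u ≠ v) (hu' : ∀ i, a i ≠ u) (hv' : ∀ j, b j ≠ v)
    (hu2 : b k ≠ u) (hv1 : a k ≠ v) :
    e (u, v) ∈ (affineSpan ℝ (Face (alphaF a b) 1 P)).direction := by
  rw [← g5_diff hab k huv (hu' k) hu2 hv1 (hv' k)]
  exact diff_mem_dir ha hb hab hP hG _ _
    (g5_val ha hb hab k huv hu' hv' hu2 hv1) (g5'_val ha hb hab k hu' hu2)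

include ha hb hab in
lemma up_mem (hm : 2 ≤ m) (i0 : Fin m) (hP : P = convexHull ℝ G)
    (hG : ∀ f : Fin n → ℝ, chi (mkR f) ∈ G) (p : Fin n × Fin n) (hp : p ∈ Dset n) :
    e p - alphaF a b p • e (a i0, b i0)
      ∈ (affineSpan ℝ (Face (alphaF a b) 1 P)).direction := by
  obtain ⟨u, v⟩ := p
  have huv : u ≠ v := (mem_Dset _).mp hp
  by_cases hu : ∃ i, a i = u
  · obtain ⟨i, rfl⟩ := hu
    by_cases hv : ∃ j, b j = v
    · obtain ⟨j, rfl⟩ := hv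
      by_cases hij : i = j
      · subst hij
        rw [alphaF_fence ha hb, one_smul]
        have h := diff_mem_dir ha hb hab hP hG (g1 a b i) (g1 a b i0)
          (g1_val ha hb hab i) (g1_val ha hb hab i0)
        rwa [g1_chi hab, g1_chi hab] at h
      · rw [alphaF_cross ha hb hij, neg_smul, one_smul, sub_neg_eq_add]
        have h2 := diff_mem_dir ha hb hab hP hG (g2 a b i j) (g1 a b i)
          (g2_val ha hb hab hij) (g1_val ha hb hab i)
        have h3 := diff_mem_dir ha hb hab hP hG (g1 a b j) (g1 a b i0)
          (g1_val ha hb hab j) (g1_val ha hb hab i0)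
        have key : e (a i, b j) + e (a i0, b i0)
            = (chi (mkR (g2 a b i j)) - chi (mkR (g1 a b i)))
              - (chi (mkR (g1 a b j)) - chi (mkR (g1 a b i0))) := by
          rw [g2_chi ha hb hab hij, g1_chi hab (k := i0)]
          abel
        rw [key]
        exact Submodule.sub_mem _ h2 h3
    · have hv' : ∀ j, b j ≠ v := fun j h => hv ⟨j, h⟩
      rw [alphaF_zero (fun k l hkl => hv' l hkl.2), zero_smul, sub_zero]
      rw [← g3_diff hab i huv.symm (fun h => hv' i h.symm)]
      exact diff_mem_dir ha hb hab hP hG _ _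
        (g3_val ha hb hab i huv.symm hv') (g1_val ha hb hab i)
  · have hu' : ∀ i, a i ≠ u := fun i h => hu ⟨i, h⟩
    rw [alphaF_zero (fun k l hkl => hu' k hkl.1), zero_smul, sub_zero]
    by_cases hv : ∃ j, b j = v
    · obtain ⟨j, rfl⟩ := hv
      rw [← g4_diff hab j (hu' j).symm huv]
      exact diff_mem_dir ha hb hab hP hG _ _
        (g4_val ha hb hab j huv hu') (g1_val ha hb hab j)
    · have hv' : ∀ j, b j ≠ v := fun j h => hv ⟨j, h⟩
      by_cases hbu : ∃ i, b i = u
      · obtain ⟨i, rfl⟩ := hbu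
        by_cases hav : ∃ j, a j = v
        · obtain ⟨j, rfl⟩ := hav
          by_cases hij : i = j
          · subst hij
            obtain ⟨k, hk⟩ := exists_ne_fin hm i
            exact up_case5 ha hb hab hP hG k huv hu' hv' (fun h => hk (hb h)) (fun h => hk (ha h))
          · rw [← g6_diff hb hab hij]
            exact diff_mem_dir ha hb hab hP hG _ _
              (g6_val ha hb hab hij) (g6'_val ha hb hab hij)
        · have hav' : ∀ j, a j ≠ v := fun j h => hav ⟨j, h⟩
          obtain ⟨k, hk⟩ := exists_ne_fin hm i
          exact up_case5 ha hb hab hP hG k huv hu' hv' (fun h => hk (hb h)) (hav' k)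
      · have hbu' : ∀ i, b i ≠ u := fun i h => hbu ⟨i, h⟩
        by_cases hav : ∃ j, a j = v
        · obtain ⟨j, rfl⟩ := hav
          obtain ⟨k, hk⟩ := exists_ne_fin hm j
          exact up_case5 ha hb hab hP hG k huv hu' hv' (hbu' k) (fun h => hk (ha h))
        · have hav' : ∀ j, a j ≠ v := fun j h => hav ⟨j, h⟩
          exact up_case5 ha hb hab hP hG i0 huv hu' hv' (hbu' i0) (hav' i0)

include ha hb hab in
lemma face_dir (hm : 2 ≤ m) (i0 : Fin m) (hP : P = convexHull ℝ G)
    (hG : ∀ f : Fin n → ℝ, chi (mkR f) ∈ G)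
    (hdiag : ∀ x ∈ G, ∀ i, x (i, i) = 0) :
    (affineSpan ℝ (Face (alphaF a b) 1 P)).direction
      = Wd n ⊓ LinearMap.ker (LF (alphaF a b)) := by
  set α := alphaF a b with hα
  set x₀ := chi (mkR (g1 a b i0)) with hx₀
  have hx₀F : x₀ ∈ Face α 1 P := ⟨hP ▸ subset_convexHull ℝ G (hG _), g1_val ha hb hab i0⟩
  apply le_antisymm
  · have h1 : affineSpan ℝ (Face α 1 P) ≤
        AffineSubspace.mk' x₀ (Wd n ⊓ LinearMap.ker (LF α)) := by
      rw [affineSpan_le]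
      intro x hx
      obtain ⟨hxP, hxl⟩ := hx
      have hxd : ∀ i, x (i, i) = 0 := fun i => diag_zero_of_hull hdiag (hP ▸ hxP) i
      have hx₀d : ∀ i, x₀ (i, i) = 0 := fun i =>
        diag_zero_of_hull hdiag (hP ▸ hx₀F.1) i
      have hsub : x -ᵥ x₀ ∈ Wd n ⊓ LinearMap.ker (LF α) := by
        rw [Submodule.mem_inf]
        constructor
        · intro i
          rw [vsub_eq_sub, Pi.sub_apply, hxd i, hx₀d i, sub_zero]
        · rw [LinearMap.mem_ker, vsub_eq_sub, map_sub]
          show lhs α x - lhs α x₀ = 0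
          rw [hxl, hx₀F.2, sub_self]
      exact AffineSubspace.mem_mk'.mpr hsub
    have h2 := AffineSubspace.direction_le h1
    rwa [AffineSubspace.direction_mk'] at h2
  · intro v hv
    obtain ⟨hv1, hv2⟩ := hv
    have hv2' : lhs α v = 0 := hv2
    have hdec : v = ∑ p ∈ Dset n, v p • (e p - α p • e (a i0, b i0)) := by
      have e1 : ∀ p ∈ Dset n, v p • (e p - α p • e (a i0, b i0))
          = v p • e p - (v p * α p) • e (a i0, b i0) := by
        intro p _
        rw [smul_sub, smul_smul]
      rw [Finset.sum_congr rfl e1, Finset.sum_sub_distrib, ← Finset.sum_smul]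
      have e2 : ∑ p ∈ Dset n, v p * α p = lhs α v := by
        rw [lhs]
        rw [Finset.sum_subset (Finset.subset_univ (Dset n))]
        · exact Finset.sum_congr rfl fun p _ => mul_comm _ _
        · intro p _ hp
          rw [mem_Dset, not_not] at hp
          have : α p = 0 := by
            rw [hα, show p = (p.1, p.1) from Prod.ext rfl hp.symm]
            exact alphaF_diag hab p.1
          rw [this, mul_zero]
      rw [e2, hv2', zero_smul, sub_zero, ← decomp_Wd hv1]
    rw [hdec]
    exact Submodule.sum_mem _ fun p hp =>
      Submodule.smul_mem _ _ (up_mem ha hb hab hm i0 hP hG p hp)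

include ha hb hab in
lemma face_adim (hm : 2 ≤ m) (hn2 : 2 ≤ n) (i0 : Fin m) (hP : P = convexHull ℝ G)
    (hG : ∀ f : Fin n → ℝ, chi (mkR f) ∈ G)
    (hdiag : ∀ x ∈ G, ∀ i, x (i, i) = 0)
    (hvalid : Valid (alphaF a b) 1 P) :
    IsFDI (alphaF a b) 1 P := by
  constructor
  · exact hvalid
  · have hx₀F : chi (mkR (g1 a b i0)) ∈ Face (alphaF a b) 1 P :=
      ⟨hP ▸ subset_convexHull ℝ G (hG _), g1_val ha hb hab i0⟩
    have hne : Face (alphaF a b) 1 P ≠ ∅ := Set.nonempty_iff_ne_empty.mp ⟨_, hx₀F⟩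
    have hw : e (a i0, b i0) ∈ Wd n := e_mem_Wd (hab i0 i0)
    have hw' : lhs (alphaF a b) (e (a i0, b i0)) ≠ 0 := by
      rw [lhs_e, alphaF_fence ha hb]
      norm_num
    rw [adim, if_neg hne, face_dir ha hb hab hm i0 hP hG hdiag,
      finrank_inf_ker hw hw', finrank_Wd, hP, adim_poly hG hdiag]
    have h1 : n * 2 ≤ n * n := Nat.mul_le_mul_left n hn2
    omega

end FaceSec
end FenceAux
open FenceAux in
theorem fence_fdi (n m : ℕ) (hm : 2 ≤ m) (hn : 2 * m ≤ n)
    (a b : Fin m → Fin n)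
    (ha : Function.Injective a) (hb : Function.Injective b)
    (hab : ∀ i j : Fin m, a i ≠ b j) :
    IsFDI (primCoeff
        (Finset.image (fun i : Fin m => (a i, b i)) Finset.univ)
        (Finset.image (fun q : Fin m × Fin m => (a q.1, b q.2))
          (Finset.univ.filter (fun q : Fin m × Fin m => q.1 ≠ q.2))))
      1 (PIO n) ∧
    IsFDI (primCoeff
        (Finset.image (fun i : Fin m => (a i, b i)) Finset.univ)
        (Finset.image (fun q : Fin m × Fin m => (a q.1, b q.2))
          (Finset.univ.filter (fun q : Fin m × Fin m => q.1 ≠ q.2))))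
      1 (PSO n) := by
  have hn2 : 2 ≤ n := by omega
  have hm0 : 0 < m := by omega
  have hIO : ∀ f : Fin n → ℝ, chi (mkR f) ∈ {x : Vec n | ∃ R, IsIntervalOrderRel R ∧ x = chi R} :=
    fun f => ⟨mkR f, io_of_semiorder (semiorder_mkR f), rfl⟩
  have hSO : ∀ f : Fin n → ℝ, chi (mkR f) ∈ {x : Vec n | ∃ R, IsSemiorderRel R ∧ x = chi R} :=
    fun f => ⟨mkR f, semiorder_mkR f, rfl⟩
  have hdIO : ∀ x ∈ {x : Vec n | ∃ R, IsIntervalOrderRel R ∧ x = chi R}, ∀ i, x (i, i) = 0 := by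
    rintro _ ⟨R, hR, rfl⟩ i
    simp [chi, irrefl_io hR i]
  have hdSO : ∀ x ∈ {x : Vec n | ∃ R, IsSemiorderRel R ∧ x = chi R}, ∀ i, x (i, i) = 0 := by
    rintro _ ⟨R, hR, rfl⟩ i
    simp [chi, irrefl_semiorder hR i]
  constructor
  · exact face_adim ha hb hab hm hn2 ⟨0, hm0⟩ rfl hIO hdIO (valid_PIO ha hb)
  · exact face_adim ha hb hab hm hn2 ⟨0, hm0⟩ rfl hSO hdSO (valid_PSO ha hb)
end
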